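/- arXiv:1706.04923 — 2 statements merged into one kernel-verified Lean document; each statement's English description precedes it below -/
import Mathlib

section
/- Let g ≥ 4 and let Ω be the alternating form of the permutation σ^{(g)}. If β is an integer with 3 ≤ β ≤ 3g−3 and β ≡ 3 (mod 6), then the vector (−e_2 + e_3) + (−e_5 + e_6) + ⋯ + (−e_{β−1} + e_β) (i.e. Σ_{k : 3k+3 ≤ β} (−e_{3k+2} + e_{3k+3})) belongs to the Ω-closure {e_α : α ∈ A}^Ω of the standard basis. -/
open Matrix

def Aset (g : ℕ) : Finset ℕ :=
  {0, 1} ∪ (Finset.range (g - 1)).biUnion (fun k => {3 * k + 2, 3 * k + 3})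

abbrev Idx (g : ℕ) := ↥(Aset g)

def evec (g : ℕ) (m : ℕ) : Idx g → ℤ := fun a => if (a : ℕ) = m then 1 else 0

def pbtau (g : ℕ) (n : ℕ) : ℕ :=
  if n = 0 then 2 * g
  else if n = 1 then 2 * g - 1
  else if n % 3 = 0 then 2 * (n / 3) - 1
  else 2 * ((n - 2) / 3) + 2

def Om (g : ℕ) (pb : ℕ → ℕ) : Matrix (Idx g) (Idx g) ℤ := fun a b =>
  if (a : ℕ) < (b : ℕ) ∧ pb (b : ℕ) < pb (a : ℕ) then 1
  else if (b : ℕ) < (a : ℕ) ∧ pb (a : ℕ) < pb (b : ℕ) then -1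
  else 0

lemma Om_skew (g : ℕ) (pb : ℕ → ℕ) : (Om g pb)ᵀ = -(Om g pb) := by
  ext a b
  simp only [Matrix.transpose_apply, Matrix.neg_apply, Om]
  split_ifs <;> omega

def pairing {g : ℕ} (Ω : Matrix (Idx g) (Idx g) ℤ) (u v : Idx g → ℤ) : ℤ :=
  u ⬝ᵥ Ω.mulVec v

lemma pairing_add {g : ℕ} (Ω : Matrix (Idx g) (Idx g) ℤ) (v u w : Idx g → ℤ) :
    pairing Ω v (u + w) = pairing Ω v u + pairing Ω v w := by
  unfold pairing; rw [Matrix.mulVec_add, dotProduct_add]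

lemma pairing_sub {g : ℕ} (Ω : Matrix (Idx g) (Idx g) ℤ) (v u w : Idx g → ℤ) :
    pairing Ω v (u - w) = pairing Ω v u - pairing Ω v w := by
  unfold pairing; rw [Matrix.mulVec_sub, dotProduct_sub]

lemma pairing_smul {g : ℕ} (Ω : Matrix (Idx g) (Idx g) ℤ) (v : Idx g → ℤ) (c : ℤ)
    (u : Idx g → ℤ) : pairing Ω v (c • u) = c * pairing Ω v u := by
  unfold pairing; rw [Matrix.mulVec_smul, dotProduct_smul, smul_eq_mul]

lemma pairing_self_zero {g : ℕ} (Ω : Matrix (Idx g) (Idx g) ℤ) (hΩ : Ωᵀ = -Ω)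
    (v : Idx g → ℤ) : pairing Ω v v = 0 := by
  have key : pairing Ω v v = -pairing Ω v v := by
    calc pairing Ω v v = ∑ a, ∑ b, v a * (Ω a b * v b) := by
          simp [pairing, dotProduct, Matrix.mulVec, Finset.mul_sum]
    _ = ∑ a, ∑ b, -(v b * (Ω b a * v a)) := by
          refine Finset.sum_congr rfl fun a _ => Finset.sum_congr rfl fun b _ => ?_
          have h : Ω a b = -Ω b a := by
            have := congrFun (congrFun hΩ.symm a) b
            simp only [Matrix.transpose_apply, Matrix.neg_apply] at this
            omega
          rw [h]; ring
    _ = -∑ b, ∑ a, v b * (Ω b a * v a) := by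
          rw [Finset.sum_comm]
          simp
    _ = -pairing Ω v v := by
          simp [pairing, dotProduct, Matrix.mulVec, Finset.mul_sum]
  omega

def transvection {g : ℕ} (Ω : Matrix (Idx g) (Idx g) ℤ) (hΩ : Ωᵀ = -Ω) (v : Idx g → ℤ) :
    (Idx g → ℤ) ≃ₗ[ℤ] (Idx g → ℤ) where
  toFun u := u + pairing Ω v u • v
  invFun u := u - pairing Ω v u • v
  map_add' u w := by
    show (u + w) + pairing Ω v (u + w) • v = (u + pairing Ω v u • v) + (w + pairing Ω v w • v)
    rw [pairing_add, add_smul]; abel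
  map_smul' c u := by
    show c • u + pairing Ω v (c • u) • v = c • (u + pairing Ω v u • v)
    rw [pairing_smul, SemigroupAction.mul_smul, smul_add]
  left_inv u := by
    show (u + pairing Ω v u • v) - pairing Ω v (u + pairing Ω v u • v) • v = u
    rw [pairing_add, pairing_smul, pairing_self_zero Ω hΩ, mul_zero, add_zero,
      add_sub_cancel_right]
  right_inv u := by
    show (u - pairing Ω v u • v) + pairing Ω v (u - pairing Ω v u • v) • v = u
    rw [pairing_sub, pairing_smul, pairing_self_zero Ω hΩ, mul_zero, sub_zero,
      sub_add_cancel]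

inductive OmegaClosure {M : Type*} [AddCommGroup M] (pair : M → M → ℤ) (V : Set M) : M → Prop
  | base {v : M} : v ∈ V → OmegaClosure pair V v
  | neg {v : M} : OmegaClosure pair V v → OmegaClosure pair V (-v)
  | add {v w : M} : OmegaClosure pair V v → OmegaClosure pair V w → pair v w = 1 →
      OmegaClosure pair V (v + w)
  | sub {v w : M} : OmegaClosure pair V v → OmegaClosure pair V w → pair v w = 1 →
      OmegaClosure pair V (v - w)

/-- The bottom bijection of Zorich's permutation `σ^{(g)}`. -/
def pbsigma (g : ℕ) (n : ℕ) : ℕ :=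
  if n = 0 then 2 * g
  else if n = 1 then 2 * g - 1
  else if n = 2 then 4
  else if n = 3 then 3
  else if n = 5 then 2
  else if n = 6 then 1
  else if n % 3 = 0 then 2 * (n / 3) - 1
  else 2 * ((n - 2) / 3) + 2

/-- The alternating form of Zorich's permutation `σ^{(g)}`
(top row `0 1 2 3 5 6 … 3g-4 3g-3`, bottom row `6 5 3 2 9 8 … 3g-3 3g-4 1 0`). -/
def OmSigma (g : ℕ) : Matrix (Idx g) (Idx g) ℤ := Om g (pbsigma g)

lemma OmSigma_skew (g : ℕ) : (OmSigma g)ᵀ = -(OmSigma g) := Om_skew g (pbsigma g)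

/-- `v* = e_0 + Σ_{k=0}^{g-2} (-e_{3k+2} + e_{3k+3})`. -/
def vstar (g : ℕ) : Idx g → ℤ :=
  evec g 0 + ∑ k ∈ Finset.range (g - 1), (-evec g (3 * k + 2) + evec g (3 * k + 3))

/-- `w* = e_1 + Σ_{k=0}^{g-2} (-e_{3k+2} + e_{3k+3})`. -/
def wstar (g : ℕ) : Idx g → ℤ :=
  evec g 1 + ∑ k ∈ Finset.range (g - 1), (-evec g (3 * k + 2) + evec g (3 * k + 3))

namespace L39

variable {g : ℕ}

abbrev CL (g : ℕ) : (Idx g → ℤ) → Prop :=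
  OmegaClosure (pairing (OmSigma g)) (Set.range fun a : Idx g => evec g (a : ℕ))

/-- The summand vector `-e_{3k+2} + e_{3k+3}`. -/
def SV (g k : ℕ) : Idx g → ℤ := -evec g (3 * k + 2) + evec g (3 * k + 3)

/-- Partial sum `∑_{k<n} SV k`. -/
def RR (g n : ℕ) : Idx g → ℤ := ∑ k ∈ Finset.range n, SV g k

lemma pairing_add_left (Ω : Matrix (Idx g) (Idx g) ℤ) (u w v : Idx g → ℤ) :
    pairing Ω (u + w) v = pairing Ω u v + pairing Ω w v := by
  unfold pairing; rw [add_dotProduct]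

lemma pairing_sub_left (Ω : Matrix (Idx g) (Idx g) ℤ) (u w v : Idx g → ℤ) :
    pairing Ω (u - w) v = pairing Ω u v - pairing Ω w v := by
  unfold pairing; rw [sub_dotProduct]

lemma pairing_neg_left (Ω : Matrix (Idx g) (Idx g) ℤ) (u v : Idx g → ℤ) :
    pairing Ω (-u) v = -pairing Ω u v := by
  unfold pairing; rw [neg_dotProduct]

lemma pairing_neg_right (Ω : Matrix (Idx g) (Idx g) ℤ) (u v : Idx g → ℤ) :
    pairing Ω u (-v) = -pairing Ω u v := by
  unfold pairing; rw [Matrix.mulVec_neg, dotProduct_neg]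

lemma pairing_zero_right (Ω : Matrix (Idx g) (Idx g) ℤ) (u : Idx g → ℤ) :
    pairing Ω u 0 = 0 := by
  unfold pairing; rw [Matrix.mulVec_zero, dotProduct_zero]

lemma pairing_sum_right (Ω : Matrix (Idx g) (Idx g) ℤ) (u : Idx g → ℤ) (n : ℕ)
    (f : ℕ → Idx g → ℤ) :
    pairing Ω u (∑ k ∈ Finset.range n, f k) = ∑ k ∈ Finset.range n, pairing Ω u (f k) := by
  induction n with
  | zero => simp [pairing_zero_right]
  | succ n ih => rw [Finset.sum_range_succ, Finset.sum_range_succ, pairing_add, ih]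

/-- membership lemmas -/
lemma mem0 : (0 : ℕ) ∈ Aset g := by
  exact Finset.mem_union_left _ (by simp)

lemma mem1 : (1 : ℕ) ∈ Aset g := by
  exact Finset.mem_union_left _ (by simp)

lemma mem32 {k : ℕ} (hk : k < g - 1) : 3 * k + 2 ∈ Aset g :=
  Finset.mem_union_right _ (Finset.mem_biUnion.mpr ⟨k, Finset.mem_range.mpr hk, by simp⟩)

lemma mem33 {k : ℕ} (hk : k < g - 1) : 3 * k + 3 ∈ Aset g :=
  Finset.mem_union_right _ (Finset.mem_biUnion.mpr ⟨k, Finset.mem_range.mpr hk, by simp⟩)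

lemma mem2 (hg : 4 ≤ g) : (2 : ℕ) ∈ Aset g := by
  have h := mem32 (g := g) (k := 0) (by omega); simpa using h
lemma mem3 (hg : 4 ≤ g) : (3 : ℕ) ∈ Aset g := by
  have h := mem33 (g := g) (k := 0) (by omega); simpa using h
lemma mem5 (hg : 4 ≤ g) : (5 : ℕ) ∈ Aset g := by
  have h := mem32 (g := g) (k := 1) (by omega); simpa using h
lemma mem6 (hg : 4 ≤ g) : (6 : ℕ) ∈ Aset g := by
  have h := mem33 (g := g) (k := 1) (by omega); simpa using h
lemma mem8 (hg : 4 ≤ g) : (8 : ℕ) ∈ Aset g := by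
  have h := mem32 (g := g) (k := 2) (by omega); simpa using h
lemma mem9 (hg : 4 ≤ g) : (9 : ℕ) ∈ Aset g := by
  have h := mem33 (g := g) (k := 2) (by omega); simpa using h

lemma clE {m : ℕ} (hm : m ∈ Aset g) : CL g (evec g m) :=
  OmegaClosure.base ⟨⟨m, hm⟩, rfl⟩

/-- Workhorse: pairing of two basis vectors. -/
lemma pairing_evec (m m' : ℕ) (hm : m ∈ Aset g) (hm' : m' ∈ Aset g) :
    pairing (OmSigma g) (evec g m) (evec g m') =
      if m < m' ∧ pbsigma g m' < pbsigma g m then 1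
      else if m' < m ∧ pbsigma g m < pbsigma g m' then -1 else 0 := by
  unfold pairing
  have h1 : (OmSigma g).mulVec (evec g m') = fun a => OmSigma g a ⟨m', hm'⟩ := by
    funext a
    unfold Matrix.mulVec dotProduct evec
    rw [Finset.sum_eq_single (⟨m', hm'⟩ : Idx g)]
    · simp
    · intro b _ hb
      have hbm : (b : ℕ) ≠ m' := fun h => hb (Subtype.ext h)
      simp [hbm]
    · simp
  rw [h1]
  unfold dotProduct evec
  rw [Finset.sum_eq_single (⟨m, hm⟩ : Idx g)]
  · simp [OmSigma, Om]
  · intro b _ hb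
    have hbm : (b : ℕ) ≠ m := fun h => hb (Subtype.ext h)
    simp [hbm]
  · simp

/-- pbsigma evaluations -/
lemma pb0 : pbsigma g 0 = 2 * g := by simp [pbsigma]
lemma pb1 : pbsigma g 1 = 2 * g - 1 := by simp [pbsigma]
lemma pb2 : pbsigma g 2 = 4 := by norm_num [pbsigma]
lemma pb3 : pbsigma g 3 = 3 := by norm_num [pbsigma]
lemma pb5 : pbsigma g 5 = 2 := by norm_num [pbsigma]
lemma pb6 : pbsigma g 6 = 1 := by norm_num [pbsigma]
lemma pb8 : pbsigma g 8 = 6 := by norm_num [pbsigma]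
lemma pb9 : pbsigma g 9 = 5 := by norm_num [pbsigma]

lemma pb32 {k : ℕ} (hk : 2 ≤ k) : pbsigma g (3 * k + 2) = 2 * k + 2 := by
  unfold pbsigma; split_ifs <;> first | omega | (exfalso; assumption)

lemma pb33 {k : ℕ} (hk : 2 ≤ k) : pbsigma g (3 * k + 3) = 2 * k + 1 := by
  unfold pbsigma; split_ifs <;> first | omega | (exfalso; assumption)

/-- upper bound on pbsigma for indices ≥ 2 -/
lemma pb_ub (hg : 4 ≤ g) {m : ℕ} (hm : m ∈ Aset g) (h2 : 2 ≤ m) :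
    pbsigma g m < 2 * g - 1 := by
  rcases Finset.mem_union.mp hm with h | h
  · simp at h; omega
  · obtain ⟨k, hk, hmk⟩ := Finset.mem_biUnion.mp h
    have hkr : k < g - 1 := Finset.mem_range.mp hk
    simp at hmk
    rcases hmk with h' | h' <;> subst h' <;> (unfold pbsigma; split_ifs <;> first | omega | (exfalso; assumption))

lemma pb_lt0 (hg : 4 ≤ g) {m : ℕ} (hm : m ∈ Aset g) (h1 : 1 ≤ m) :
    pbsigma g m < 2 * g := by
  by_cases h2 : 2 ≤ m
  · have := pb_ub hg hm h2; omega
  · have hm1 : m = 1 := by omega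
    subst hm1; rw [pb1]; omega

/-- atomic pairing values -/
lemma P0x (hg : 4 ≤ g) {m : ℕ} (hm : m ∈ Aset g) (h1 : 1 ≤ m) :
    pairing (OmSigma g) (evec g 0) (evec g m) = 1 := by
  have hub := pb_lt0 hg hm h1
  rw [pairing_evec 0 m mem0 hm, pb0]
  split_ifs <;> omega

lemma Px0 (hg : 4 ≤ g) {m : ℕ} (hm : m ∈ Aset g) (h1 : 1 ≤ m) :
    pairing (OmSigma g) (evec g m) (evec g 0) = -1 := by
  have hub := pb_lt0 hg hm h1
  rw [pairing_evec m 0 hm mem0, pb0]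
  split_ifs <;> omega

lemma P1x (hg : 4 ≤ g) {m : ℕ} (hm : m ∈ Aset g) (h2 : 2 ≤ m) :
    pairing (OmSigma g) (evec g 1) (evec g m) = 1 := by
  have hub := pb_ub hg hm h2
  rw [pairing_evec 1 m mem1 hm, pb1]
  split_ifs <;> omega

lemma Px1 (hg : 4 ≤ g) {m : ℕ} (hm : m ∈ Aset g) (h2 : 2 ≤ m) :
    pairing (OmSigma g) (evec g m) (evec g 1) = -1 := by
  have hub := pb_ub hg hm h2
  rw [pairing_evec m 1 hm mem1, pb1]
  split_ifs <;> omega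

lemma Ppair {k : ℕ} (h2 : 2 ≤ k) (hk : k < g - 1) :
    pairing (OmSigma g) (evec g (3 * k + 2)) (evec g (3 * k + 3)) = 1 := by
  rw [pairing_evec _ _ (mem32 hk) (mem33 hk), pb32 h2, pb33 h2]
  split_ifs <;> omega

lemma PpairR {k : ℕ} (h2 : 2 ≤ k) (hk : k < g - 1) :
    pairing (OmSigma g) (evec g (3 * k + 3)) (evec g (3 * k + 2)) = -1 := by
  rw [pairing_evec _ _ (mem33 hk) (mem32 hk), pb32 h2, pb33 h2]
  split_ifs <;> omega

lemma Pdiag {m : ℕ} (hm : m ∈ Aset g) :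
    pairing (OmSigma g) (evec g m) (evec g m) = 0 := by
  rw [pairing_evec m m hm hm]
  split_ifs <;> omega

lemma Pzlt {x y : ℕ} (hx : x ∈ Aset g) (hy : y ∈ Aset g) (hxy : x < y)
    (hpb : pbsigma g x < pbsigma g y) :
    pairing (OmSigma g) (evec g x) (evec g y) = 0 := by
  rw [pairing_evec x y hx hy]; split_ifs <;> omega

lemma PzltR {x y : ℕ} (hx : x ∈ Aset g) (hy : y ∈ Aset g) (hxy : x < y)
    (hpb : pbsigma g x < pbsigma g y) :
    pairing (OmSigma g) (evec g y) (evec g x) = 0 := by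
  rw [pairing_evec y x hy hx]; split_ifs <;> omega


lemma base1 {g : ℕ} (hg : 4 ≤ g) :
    CL g (evec g 0 + (SV g 0 + SV g 1)) ∧ CL g (evec g 1 + (SV g 0 + SV g 1)) ∧
      CL g (SV g 0 + SV g 1 + SV g 2) := by
  have h00 : pairing (OmSigma g) (evec g 0) (evec g 0) = 0 := Pdiag mem0
  have h01 : pairing (OmSigma g) (evec g 0) (evec g 1) = 1 := P0x hg mem1 (by norm_num)
  have h02 : pairing (OmSigma g) (evec g 0) (evec g 2) = 1 := P0x hg (mem2 hg) (by norm_num)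
  have h03 : pairing (OmSigma g) (evec g 0) (evec g 3) = 1 := P0x hg (mem3 hg) (by norm_num)
  have h05 : pairing (OmSigma g) (evec g 0) (evec g 5) = 1 := P0x hg (mem5 hg) (by norm_num)
  have h06 : pairing (OmSigma g) (evec g 0) (evec g 6) = 1 := P0x hg (mem6 hg) (by norm_num)
  have h08 : pairing (OmSigma g) (evec g 0) (evec g 8) = 1 := P0x hg (mem8 hg) (by norm_num)
  have h09 : pairing (OmSigma g) (evec g 0) (evec g 9) = 1 := P0x hg (mem9 hg) (by norm_num)
  have h10 : pairing (OmSigma g) (evec g 1) (evec g 0) = -1 := Px0 hg mem1 (by norm_num)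
  have h11 : pairing (OmSigma g) (evec g 1) (evec g 1) = 0 := Pdiag mem1
  have h12 : pairing (OmSigma g) (evec g 1) (evec g 2) = 1 := P1x hg (mem2 hg) (by norm_num)
  have h13 : pairing (OmSigma g) (evec g 1) (evec g 3) = 1 := P1x hg (mem3 hg) (by norm_num)
  have h15 : pairing (OmSigma g) (evec g 1) (evec g 5) = 1 := P1x hg (mem5 hg) (by norm_num)
  have h16 : pairing (OmSigma g) (evec g 1) (evec g 6) = 1 := P1x hg (mem6 hg) (by norm_num)
  have h18 : pairing (OmSigma g) (evec g 1) (evec g 8) = 1 := P1x hg (mem8 hg) (by norm_num)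
  have h19 : pairing (OmSigma g) (evec g 1) (evec g 9) = 1 := P1x hg (mem9 hg) (by norm_num)
  have h20 : pairing (OmSigma g) (evec g 2) (evec g 0) = -1 := Px0 hg (mem2 hg) (by norm_num)
  have h21 : pairing (OmSigma g) (evec g 2) (evec g 1) = -1 := Px1 hg (mem2 hg) (by norm_num)
  have h22 : pairing (OmSigma g) (evec g 2) (evec g 2) = 0 := Pdiag (mem2 hg)
  have h23 : pairing (OmSigma g) (evec g 2) (evec g 3) = 1 := by rw [pairing_evec 2 3 (mem2 hg) (mem3 hg), pb2, pb3]; norm_num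
  have h25 : pairing (OmSigma g) (evec g 2) (evec g 5) = 1 := by rw [pairing_evec 2 5 (mem2 hg) (mem5 hg), pb2, pb5]; norm_num
  have h26 : pairing (OmSigma g) (evec g 2) (evec g 6) = 1 := by rw [pairing_evec 2 6 (mem2 hg) (mem6 hg), pb2, pb6]; norm_num
  have h28 : pairing (OmSigma g) (evec g 2) (evec g 8) = 0 := Pzlt (mem2 hg) (mem8 hg) (by norm_num) (by rw [pb2, pb8]; norm_num)
  have h29 : pairing (OmSigma g) (evec g 2) (evec g 9) = 0 := Pzlt (mem2 hg) (mem9 hg) (by norm_num) (by rw [pb2, pb9]; norm_num)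
  have h30 : pairing (OmSigma g) (evec g 3) (evec g 0) = -1 := Px0 hg (mem3 hg) (by norm_num)
  have h31 : pairing (OmSigma g) (evec g 3) (evec g 1) = -1 := Px1 hg (mem3 hg) (by norm_num)
  have h32 : pairing (OmSigma g) (evec g 3) (evec g 2) = -1 := by rw [pairing_evec 3 2 (mem3 hg) (mem2 hg), pb3, pb2]; norm_num
  have h33 : pairing (OmSigma g) (evec g 3) (evec g 3) = 0 := Pdiag (mem3 hg)
  have h35 : pairing (OmSigma g) (evec g 3) (evec g 5) = 1 := by rw [pairing_evec 3 5 (mem3 hg) (mem5 hg), pb3, pb5]; norm_num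
  have h36 : pairing (OmSigma g) (evec g 3) (evec g 6) = 1 := by rw [pairing_evec 3 6 (mem3 hg) (mem6 hg), pb3, pb6]; norm_num
  have h38 : pairing (OmSigma g) (evec g 3) (evec g 8) = 0 := Pzlt (mem3 hg) (mem8 hg) (by norm_num) (by rw [pb3, pb8]; norm_num)
  have h39 : pairing (OmSigma g) (evec g 3) (evec g 9) = 0 := Pzlt (mem3 hg) (mem9 hg) (by norm_num) (by rw [pb3, pb9]; norm_num)
  have h50 : pairing (OmSigma g) (evec g 5) (evec g 0) = -1 := Px0 hg (mem5 hg) (by norm_num)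
  have h51 : pairing (OmSigma g) (evec g 5) (evec g 1) = -1 := Px1 hg (mem5 hg) (by norm_num)
  have h52 : pairing (OmSigma g) (evec g 5) (evec g 2) = -1 := by rw [pairing_evec 5 2 (mem5 hg) (mem2 hg), pb5, pb2]; norm_num
  have h53 : pairing (OmSigma g) (evec g 5) (evec g 3) = -1 := by rw [pairing_evec 5 3 (mem5 hg) (mem3 hg), pb5, pb3]; norm_num
  have h55 : pairing (OmSigma g) (evec g 5) (evec g 5) = 0 := Pdiag (mem5 hg)
  have h56 : pairing (OmSigma g) (evec g 5) (evec g 6) = 1 := by rw [pairing_evec 5 6 (mem5 hg) (mem6 hg), pb5, pb6]; norm_num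
  have h58 : pairing (OmSigma g) (evec g 5) (evec g 8) = 0 := Pzlt (mem5 hg) (mem8 hg) (by norm_num) (by rw [pb5, pb8]; norm_num)
  have h59 : pairing (OmSigma g) (evec g 5) (evec g 9) = 0 := Pzlt (mem5 hg) (mem9 hg) (by norm_num) (by rw [pb5, pb9]; norm_num)
  have h60 : pairing (OmSigma g) (evec g 6) (evec g 0) = -1 := Px0 hg (mem6 hg) (by norm_num)
  have h61 : pairing (OmSigma g) (evec g 6) (evec g 1) = -1 := Px1 hg (mem6 hg) (by norm_num)
  have h62 : pairing (OmSigma g) (evec g 6) (evec g 2) = -1 := by rw [pairing_evec 6 2 (mem6 hg) (mem2 hg), pb6, pb2]; norm_num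
  have h63 : pairing (OmSigma g) (evec g 6) (evec g 3) = -1 := by rw [pairing_evec 6 3 (mem6 hg) (mem3 hg), pb6, pb3]; norm_num
  have h65 : pairing (OmSigma g) (evec g 6) (evec g 5) = -1 := by rw [pairing_evec 6 5 (mem6 hg) (mem5 hg), pb6, pb5]; norm_num
  have h66 : pairing (OmSigma g) (evec g 6) (evec g 6) = 0 := Pdiag (mem6 hg)
  have h68 : pairing (OmSigma g) (evec g 6) (evec g 8) = 0 := Pzlt (mem6 hg) (mem8 hg) (by norm_num) (by rw [pb6, pb8]; norm_num)
  have h69 : pairing (OmSigma g) (evec g 6) (evec g 9) = 0 := Pzlt (mem6 hg) (mem9 hg) (by norm_num) (by rw [pb6, pb9]; norm_num)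
  have h80 : pairing (OmSigma g) (evec g 8) (evec g 0) = -1 := Px0 hg (mem8 hg) (by norm_num)
  have h81 : pairing (OmSigma g) (evec g 8) (evec g 1) = -1 := Px1 hg (mem8 hg) (by norm_num)
  have h82 : pairing (OmSigma g) (evec g 8) (evec g 2) = 0 := PzltR (mem2 hg) (mem8 hg) (by norm_num) (by rw [pb2, pb8]; norm_num)
  have h83 : pairing (OmSigma g) (evec g 8) (evec g 3) = 0 := PzltR (mem3 hg) (mem8 hg) (by norm_num) (by rw [pb3, pb8]; norm_num)
  have h85 : pairing (OmSigma g) (evec g 8) (evec g 5) = 0 := PzltR (mem5 hg) (mem8 hg) (by norm_num) (by rw [pb5, pb8]; norm_num)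
  have h86 : pairing (OmSigma g) (evec g 8) (evec g 6) = 0 := PzltR (mem6 hg) (mem8 hg) (by norm_num) (by rw [pb6, pb8]; norm_num)
  have h88 : pairing (OmSigma g) (evec g 8) (evec g 8) = 0 := Pdiag (mem8 hg)
  have h89 : pairing (OmSigma g) (evec g 8) (evec g 9) = 1 := by have h := Ppair (g := g) (k := 2) (by norm_num) (by omega); norm_num at h; exact h
  have h90 : pairing (OmSigma g) (evec g 9) (evec g 0) = -1 := Px0 hg (mem9 hg) (by norm_num)
  have h91 : pairing (OmSigma g) (evec g 9) (evec g 1) = -1 := Px1 hg (mem9 hg) (by norm_num)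
  have h92 : pairing (OmSigma g) (evec g 9) (evec g 2) = 0 := PzltR (mem2 hg) (mem9 hg) (by norm_num) (by rw [pb2, pb9]; norm_num)
  have h93 : pairing (OmSigma g) (evec g 9) (evec g 3) = 0 := PzltR (mem3 hg) (mem9 hg) (by norm_num) (by rw [pb3, pb9]; norm_num)
  have h95 : pairing (OmSigma g) (evec g 9) (evec g 5) = 0 := PzltR (mem5 hg) (mem9 hg) (by norm_num) (by rw [pb5, pb9]; norm_num)
  have h96 : pairing (OmSigma g) (evec g 9) (evec g 6) = 0 := PzltR (mem6 hg) (mem9 hg) (by norm_num) (by rw [pb6, pb9]; norm_num)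
  have h98 : pairing (OmSigma g) (evec g 9) (evec g 8) = -1 := by have h := PpairR (g := g) (k := 2) (by norm_num) (by omega); norm_num at h; exact h
  have h99 : pairing (OmSigma g) (evec g 9) (evec g 9) = 0 := Pdiag (mem9 hg)
  have e0 := clE (g := g) mem0
  have e1 := clE (g := g) mem1
  have e2 := clE (mem2 hg); have e3 := clE (mem3 hg)
  have e5 := clE (mem5 hg); have e6 := clE (mem6 hg)
  have e8 := clE (mem8 hg); have e9 := clE (mem9 hg)
  -- T1 chain
  have c1 : CL g (evec g 0 + evec g 2) := e0.add e2 h02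
  have c2 := c1.neg
  have c3 := e3.neg
  have c4 : CL g (evec g 1 + evec g 8) := e1.add e8 h18
  have c5 : CL g (-evec g 3 + (evec g 1 + evec g 8)) := c3.add c4 (by simp only [pairing_add, pairing_sub, pairing_add_left, pairing_sub_left, pairing_neg_left, pairing_neg_right, h00, h01, h02, h03, h05, h06, h08, h09, h10, h11, h12, h13, h15, h16, h18, h19, h20, h21, h22, h23, h25, h26, h28, h29, h30, h31, h32, h33, h35, h36, h38, h39, h50, h51, h52, h53, h55, h56, h58, h59, h60, h61, h62, h63, h65, h66, h68, h69, h80, h81, h82, h83, h85, h86, h88, h89, h90, h91, h92, h93, h95, h96, h98, h99]; norm_num)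
  have c6 : CL g (-(evec g 0 + evec g 2) - (-evec g 3 + (evec g 1 + evec g 8))) := c2.sub c5 (by simp only [pairing_add, pairing_sub, pairing_add_left, pairing_sub_left, pairing_neg_left, pairing_neg_right, h00, h01, h02, h03, h05, h06, h08, h09, h10, h11, h12, h13, h15, h16, h18, h19, h20, h21, h22, h23, h25, h26, h28, h29, h30, h31, h32, h33, h35, h36, h38, h39, h50, h51, h52, h53, h55, h56, h58, h59, h60, h61, h62, h63, h65, h66, h68, h69, h80, h81, h82, h83, h85, h86, h88, h89, h90, h91, h92, h93, h95, h96, h98, h99]; norm_num)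
  have c7 := e5.neg
  have c8 : CL g (evec g 1 + evec g 9) := e1.add e9 h19
  have c9 : CL g (-evec g 5 + (evec g 1 + evec g 9)) := c7.add c8 (by simp only [pairing_add, pairing_sub, pairing_add_left, pairing_sub_left, pairing_neg_left, pairing_neg_right, h00, h01, h02, h03, h05, h06, h08, h09, h10, h11, h12, h13, h15, h16, h18, h19, h20, h21, h22, h23, h25, h26, h28, h29, h30, h31, h32, h33, h35, h36, h38, h39, h50, h51, h52, h53, h55, h56, h58, h59, h60, h61, h62, h63, h65, h66, h68, h69, h80, h81, h82, h83, h85, h86, h88, h89, h90, h91, h92, h93, h95, h96, h98, h99]; norm_num)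
  have c10 : CL g (evec g 0 + evec g 6) := e0.add e6 h06
  have c11 := c10.neg
  have c12 : CL g ((-evec g 5 + (evec g 1 + evec g 9)) - -(evec g 0 + evec g 6)) := c9.sub c11 (by simp only [pairing_add, pairing_sub, pairing_add_left, pairing_sub_left, pairing_neg_left, pairing_neg_right, h00, h01, h02, h03, h05, h06, h08, h09, h10, h11, h12, h13, h15, h16, h18, h19, h20, h21, h22, h23, h25, h26, h28, h29, h30, h31, h32, h33, h35, h36, h38, h39, h50, h51, h52, h53, h55, h56, h58, h59, h60, h61, h62, h63, h65, h66, h68, h69, h80, h81, h82, h83, h85, h86, h88, h89, h90, h91, h92, h93, h95, h96, h98, h99]; norm_num)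
  have cT : CL g (((-evec g 5 + (evec g 1 + evec g 9)) - -(evec g 0 + evec g 6)) + (-(evec g 0 + evec g 2) - (-evec g 3 + (evec g 1 + evec g 8)))) := c12.add c6 (by simp only [pairing_add, pairing_sub, pairing_add_left, pairing_sub_left, pairing_neg_left, pairing_neg_right, h00, h01, h02, h03, h05, h06, h08, h09, h10, h11, h12, h13, h15, h16, h18, h19, h20, h21, h22, h23, h25, h26, h28, h29, h30, h31, h32, h33, h35, h36, h38, h39, h50, h51, h52, h53, h55, h56, h58, h59, h60, h61, h62, h63, h65, h66, h68, h69, h80, h81, h82, h83, h85, h86, h88, h89, h90, h91, h92, h93, h95, h96, h98, h99]; norm_num)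
  -- A1 chain
  have d1 := e2.neg
  have d2 : CL g (evec g 0 + evec g 8) := e0.add e8 h08
  have d3 : CL g (-evec g 2 + (evec g 0 + evec g 8)) := d1.add d2 (by simp only [pairing_add, pairing_sub, pairing_add_left, pairing_sub_left, pairing_neg_left, pairing_neg_right, h00, h01, h02, h03, h05, h06, h08, h09, h10, h11, h12, h13, h15, h16, h18, h19, h20, h21, h22, h23, h25, h26, h28, h29, h30, h31, h32, h33, h35, h36, h38, h39, h50, h51, h52, h53, h55, h56, h58, h59, h60, h61, h62, h63, h65, h66, h68, h69, h80, h81, h82, h83, h85, h86, h88, h89, h90, h91, h92, h93, h95, h96, h98, h99]; norm_num)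
  have d4 := e3.neg
  have d5 : CL g (evec g 1 - evec g 9) := e1.sub e9 h19
  have d6 : CL g (-evec g 3 - (evec g 1 - evec g 9)) := d4.sub d5 (by simp only [pairing_add, pairing_sub, pairing_add_left, pairing_sub_left, pairing_neg_left, pairing_neg_right, h00, h01, h02, h03, h05, h06, h08, h09, h10, h11, h12, h13, h15, h16, h18, h19, h20, h21, h22, h23, h25, h26, h28, h29, h30, h31, h32, h33, h35, h36, h38, h39, h50, h51, h52, h53, h55, h56, h58, h59, h60, h61, h62, h63, h65, h66, h68, h69, h80, h81, h82, h83, h85, h86, h88, h89, h90, h91, h92, h93, h95, h96, h98, h99]; norm_num)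
  have d7 : CL g ((-evec g 2 + (evec g 0 + evec g 8)) - (-evec g 3 - (evec g 1 - evec g 9))) := d3.sub d6 (by simp only [pairing_add, pairing_sub, pairing_add_left, pairing_sub_left, pairing_neg_left, pairing_neg_right, h00, h01, h02, h03, h05, h06, h08, h09, h10, h11, h12, h13, h15, h16, h18, h19, h20, h21, h22, h23, h25, h26, h28, h29, h30, h31, h32, h33, h35, h36, h38, h39, h50, h51, h52, h53, h55, h56, h58, h59, h60, h61, h62, h63, h65, h66, h68, h69, h80, h81, h82, h83, h85, h86, h88, h89, h90, h91, h92, h93, h95, h96, h98, h99]; norm_num)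
  have d8 := e5.neg
  have d9 : CL g (evec g 0 + evec g 9) := e0.add e9 h09
  have d10 : CL g (-evec g 5 + (evec g 0 + evec g 9)) := d8.add d9 (by simp only [pairing_add, pairing_sub, pairing_add_left, pairing_sub_left, pairing_neg_left, pairing_neg_right, h00, h01, h02, h03, h05, h06, h08, h09, h10, h11, h12, h13, h15, h16, h18, h19, h20, h21, h22, h23, h25, h26, h28, h29, h30, h31, h32, h33, h35, h36, h38, h39, h50, h51, h52, h53, h55, h56, h58, h59, h60, h61, h62, h63, h65, h66, h68, h69, h80, h81, h82, h83, h85, h86, h88, h89, h90, h91, h92, h93, h95, h96, h98, h99]; norm_num)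
  have d11 : CL g (evec g 1 - evec g 6) := e1.sub e6 h16
  have d12 : CL g ((evec g 1 - evec g 6) + (evec g 0 + evec g 8)) := d11.add d2 (by simp only [pairing_add, pairing_sub, pairing_add_left, pairing_sub_left, pairing_neg_left, pairing_neg_right, h00, h01, h02, h03, h05, h06, h08, h09, h10, h11, h12, h13, h15, h16, h18, h19, h20, h21, h22, h23, h25, h26, h28, h29, h30, h31, h32, h33, h35, h36, h38, h39, h50, h51, h52, h53, h55, h56, h58, h59, h60, h61, h62, h63, h65, h66, h68, h69, h80, h81, h82, h83, h85, h86, h88, h89, h90, h91, h92, h93, h95, h96, h98, h99]; norm_num)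
  have d13 : CL g ((-evec g 5 + (evec g 0 + evec g 9)) - ((evec g 1 - evec g 6) + (evec g 0 + evec g 8))) := d10.sub d12 (by simp only [pairing_add, pairing_sub, pairing_add_left, pairing_sub_left, pairing_neg_left, pairing_neg_right, h00, h01, h02, h03, h05, h06, h08, h09, h10, h11, h12, h13, h15, h16, h18, h19, h20, h21, h22, h23, h25, h26, h28, h29, h30, h31, h32, h33, h35, h36, h38, h39, h50, h51, h52, h53, h55, h56, h58, h59, h60, h61, h62, h63, h65, h66, h68, h69, h80, h81, h82, h83, h85, h86, h88, h89, h90, h91, h92, h93, h95, h96, h98, h99]; norm_num)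
  have cA : CL g (((-evec g 5 + (evec g 0 + evec g 9)) - ((evec g 1 - evec g 6) + (evec g 0 + evec g 8))) + ((-evec g 2 + (evec g 0 + evec g 8)) - (-evec g 3 - (evec g 1 - evec g 9)))) := d13.add d7 (by simp only [pairing_add, pairing_sub, pairing_add_left, pairing_sub_left, pairing_neg_left, pairing_neg_right, h00, h01, h02, h03, h05, h06, h08, h09, h10, h11, h12, h13, h15, h16, h18, h19, h20, h21, h22, h23, h25, h26, h28, h29, h30, h31, h32, h33, h35, h36, h38, h39, h50, h51, h52, h53, h55, h56, h58, h59, h60, h61, h62, h63, h65, h66, h68, h69, h80, h81, h82, h83, h85, h86, h88, h89, h90, h91, h92, h93, h95, h96, h98, h99]; norm_num)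
  -- B1 chain
  have f3 : CL g (-evec g 5 - (evec g 1 - evec g 9)) := d8.sub d5 (by simp only [pairing_add, pairing_sub, pairing_add_left, pairing_sub_left, pairing_neg_left, pairing_neg_right, h00, h01, h02, h03, h05, h06, h08, h09, h10, h11, h12, h13, h15, h16, h18, h19, h20, h21, h22, h23, h25, h26, h28, h29, h30, h31, h32, h33, h35, h36, h38, h39, h50, h51, h52, h53, h55, h56, h58, h59, h60, h61, h62, h63, h65, h66, h68, h69, h80, h81, h82, h83, h85, h86, h88, h89, h90, h91, h92, h93, h95, h96, h98, h99]; norm_num)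
  have f4 : CL g (evec g 0 - evec g 6) := e0.sub e6 h06
  have f5 : CL g (evec g 1 - evec g 8) := e1.sub e8 h18
  have f6 : CL g ((evec g 0 - evec g 6) - (evec g 1 - evec g 8)) := f4.sub f5 (by simp only [pairing_add, pairing_sub, pairing_add_left, pairing_sub_left, pairing_neg_left, pairing_neg_right, h00, h01, h02, h03, h05, h06, h08, h09, h10, h11, h12, h13, h15, h16, h18, h19, h20, h21, h22, h23, h25, h26, h28, h29, h30, h31, h32, h33, h35, h36, h38, h39, h50, h51, h52, h53, h55, h56, h58, h59, h60, h61, h62, h63, h65, h66, h68, h69, h80, h81, h82, h83, h85, h86, h88, h89, h90, h91, h92, h93, h95, h96, h98, h99]; norm_num)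
  have f7 : CL g ((-evec g 5 - (evec g 1 - evec g 9)) - ((evec g 0 - evec g 6) - (evec g 1 - evec g 8))) := f3.sub f6 (by simp only [pairing_add, pairing_sub, pairing_add_left, pairing_sub_left, pairing_neg_left, pairing_neg_right, h00, h01, h02, h03, h05, h06, h08, h09, h10, h11, h12, h13, h15, h16, h18, h19, h20, h21, h22, h23, h25, h26, h28, h29, h30, h31, h32, h33, h35, h36, h38, h39, h50, h51, h52, h53, h55, h56, h58, h59, h60, h61, h62, h63, h65, h66, h68, h69, h80, h81, h82, h83, h85, h86, h88, h89, h90, h91, h92, h93, h95, h96, h98, h99]; norm_num)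
  have cB : CL g (((-evec g 2 + (evec g 0 + evec g 8)) - (-evec g 3 - (evec g 1 - evec g 9))) + ((-evec g 5 - (evec g 1 - evec g 9)) - ((evec g 0 - evec g 6) - (evec g 1 - evec g 8)))) := d7.add f7 (by simp only [pairing_add, pairing_sub, pairing_add_left, pairing_sub_left, pairing_neg_left, pairing_neg_right, h00, h01, h02, h03, h05, h06, h08, h09, h10, h11, h12, h13, h15, h16, h18, h19, h20, h21, h22, h23, h25, h26, h28, h29, h30, h31, h32, h33, h35, h36, h38, h39, h50, h51, h52, h53, h55, h56, h58, h59, h60, h61, h62, h63, h65, h66, h68, h69, h80, h81, h82, h83, h85, h86, h88, h89, h90, h91, h92, h93, h95, h96, h98, h99]; norm_num)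
  refine ⟨?_, ?_, ?_⟩
  · have heq : ((-evec g 5 + (evec g 0 + evec g 9)) - ((evec g 1 - evec g 6) + (evec g 0 + evec g 8))) + ((-evec g 2 + (evec g 0 + evec g 8)) - (-evec g 3 - (evec g 1 - evec g 9))) = evec g 0 + (SV g 0 + SV g 1) := by
      unfold SV; norm_num; abel
    exact heq ▸ cA
  · have heq : ((-evec g 2 + (evec g 0 + evec g 8)) - (-evec g 3 - (evec g 1 - evec g 9))) + ((-evec g 5 - (evec g 1 - evec g 9)) - ((evec g 0 - evec g 6) - (evec g 1 - evec g 8))) = evec g 1 + (SV g 0 + SV g 1) := by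
      unfold SV; norm_num; abel
    exact heq ▸ cB
  · have heq : ((-evec g 5 + (evec g 1 + evec g 9)) - -(evec g 0 + evec g 6)) + (-(evec g 0 + evec g 2) - (-evec g 3 + (evec g 1 + evec g 8))) = SV g 0 + SV g 1 + SV g 2 := by
      unfold SV; norm_num; abel
    exact heq ▸ cT

lemma RR_succ {g : ℕ} (n : ℕ) : RR g (n + 1) = RR g n + SV g n := by
  unfold RR; rw [Finset.sum_range_succ]

lemma pb_lt_cross {g : ℕ} {j k : ℕ} (hjk : j < k) (hk2 : 2 ≤ k) :
    pbsigma g (3 * j + 2) < 2 * k + 1 ∧ pbsigma g (3 * j + 3) < 2 * k + 1 := by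
  constructor <;> (unfold pbsigma; split_ifs <;> first | omega | (exfalso; assumption))

lemma P0_SV {g : ℕ} (hg : 4 ≤ g) {j : ℕ} (hj : j < g - 1) :
    pairing (OmSigma g) (evec g 0) (SV g j) = 0 := by
  unfold SV
  rw [pairing_add, pairing_neg_right, P0x hg (mem32 hj) (by omega),
    P0x hg (mem33 hj) (by omega)]
  norm_num

lemma P1_SV {g : ℕ} (hg : 4 ≤ g) {j : ℕ} (hj : j < g - 1) :
    pairing (OmSigma g) (evec g 1) (SV g j) = 0 := by
  unfold SV
  rw [pairing_add, pairing_neg_right, P1x hg (mem32 hj) (by omega),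
    P1x hg (mem33 hj) (by omega)]
  norm_num

lemma Pk_SV2 {g : ℕ} {j k : ℕ} (hjk : j < k) (hk2 : 2 ≤ k) (hjg : j < g - 1)
    (hkg : k < g - 1) :
    pairing (OmSigma g) (evec g (3 * k + 2)) (SV g j) = 0 := by
  unfold SV
  rw [pairing_add, pairing_neg_right,
    PzltR (mem32 hjg) (mem32 hkg) (by omega)
      (by rw [pb32 hk2]; have := (pb_lt_cross (g := g) hjk hk2).1; omega),
    PzltR (mem33 hjg) (mem32 hkg) (by omega)
      (by rw [pb32 hk2]; have := (pb_lt_cross (g := g) hjk hk2).2; omega)]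
  norm_num

lemma Pk_SV3 {g : ℕ} {j k : ℕ} (hjk : j < k) (hk2 : 2 ≤ k) (hjg : j < g - 1)
    (hkg : k < g - 1) :
    pairing (OmSigma g) (evec g (3 * k + 3)) (SV g j) = 0 := by
  unfold SV
  rw [pairing_add, pairing_neg_right,
    PzltR (mem32 hjg) (mem33 hkg) (by omega)
      (by rw [pb33 hk2]; have := (pb_lt_cross (g := g) hjk hk2).1; omega),
    PzltR (mem33 hjg) (mem33 hkg) (by omega)
      (by rw [pb33 hk2]; have := (pb_lt_cross (g := g) hjk hk2).2; omega)]
  norm_num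

lemma PR_zero {g : ℕ} (v : Idx g → ℤ) (n : ℕ)
    (h : ∀ j, j < n → pairing (OmSigma g) v (SV g j) = 0) :
    pairing (OmSigma g) v (RR g n) = 0 := by
  unfold RR
  rw [pairing_sum_right]
  exact Finset.sum_eq_zero fun j hj => h j (Finset.mem_range.mp hj)

lemma step {g : ℕ} (hg : 4 ≤ g) (r : ℕ) (hr2 : 2 ≤ r) (hq : r + 2 < g - 1)
    (hA : CL g (evec g 0 + RR g r)) (hB : CL g (evec g 1 + RR g r))
    (hT : CL g (RR g r + SV g r)) :
    CL g (evec g 0 + RR g (r + 2)) ∧ CL g (evec g 1 + RR g (r + 2)) ∧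
      CL g (RR g (r + 2) + SV g (r + 2)) := by
  have hr : r < g - 1 := by omega
  have hp : r + 1 < g - 1 := by omega
  -- basis closure elements
  have e0 := clE (g := g) mem0
  have e1 := clE (g := g) mem1
  have er2 := clE (mem32 hr); have er3 := clE (mem33 hr)
  have ep2 := clE (mem32 hp); have ep3 := clE (mem33 hp)
  have eq2 := clE (mem32 hq); have eq3 := clE (mem33 hq)
  -- atomic pairing values
  have a0r2 : pairing (OmSigma g) (evec g 0) (evec g (3 * r + 2)) = 1 :=
    P0x hg (mem32 hr) (by omega)
  have a0r3 : pairing (OmSigma g) (evec g 0) (evec g (3 * r + 3)) = 1 :=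
    P0x hg (mem33 hr) (by omega)
  have a0p2 : pairing (OmSigma g) (evec g 0) (evec g (3 * (r + 1) + 2)) = 1 :=
    P0x hg (mem32 hp) (by omega)
  have a0p3 : pairing (OmSigma g) (evec g 0) (evec g (3 * (r + 1) + 3)) = 1 :=
    P0x hg (mem33 hp) (by omega)
  have a0q2 : pairing (OmSigma g) (evec g 0) (evec g (3 * (r + 2) + 2)) = 1 :=
    P0x hg (mem32 hq) (by omega)
  have a0q3 : pairing (OmSigma g) (evec g 0) (evec g (3 * (r + 2) + 3)) = 1 :=
    P0x hg (mem33 hq) (by omega)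
  have ar20 : pairing (OmSigma g) (evec g (3 * r + 2)) (evec g 0) = -1 :=
    Px0 hg (mem32 hr) (by omega)
  have ar30 : pairing (OmSigma g) (evec g (3 * r + 3)) (evec g 0) = -1 :=
    Px0 hg (mem33 hr) (by omega)
  have ap20 : pairing (OmSigma g) (evec g (3 * (r + 1) + 2)) (evec g 0) = -1 :=
    Px0 hg (mem32 hp) (by omega)
  have ap30 : pairing (OmSigma g) (evec g (3 * (r + 1) + 3)) (evec g 0) = -1 :=
    Px0 hg (mem33 hp) (by omega)
  have aq20 : pairing (OmSigma g) (evec g (3 * (r + 2) + 2)) (evec g 0) = -1 :=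
    Px0 hg (mem32 hq) (by omega)
  have aq30 : pairing (OmSigma g) (evec g (3 * (r + 2) + 3)) (evec g 0) = -1 :=
    Px0 hg (mem33 hq) (by omega)
  have a1r2 : pairing (OmSigma g) (evec g 1) (evec g (3 * r + 2)) = 1 :=
    P1x hg (mem32 hr) (by omega)
  have a1r3 : pairing (OmSigma g) (evec g 1) (evec g (3 * r + 3)) = 1 :=
    P1x hg (mem33 hr) (by omega)
  have a1p2 : pairing (OmSigma g) (evec g 1) (evec g (3 * (r + 1) + 2)) = 1 :=
    P1x hg (mem32 hp) (by omega)
  have a1p3 : pairing (OmSigma g) (evec g 1) (evec g (3 * (r + 1) + 3)) = 1 :=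
    P1x hg (mem33 hp) (by omega)
  have a1q2 : pairing (OmSigma g) (evec g 1) (evec g (3 * (r + 2) + 2)) = 1 :=
    P1x hg (mem32 hq) (by omega)
  have a1q3 : pairing (OmSigma g) (evec g 1) (evec g (3 * (r + 2) + 3)) = 1 :=
    P1x hg (mem33 hq) (by omega)
  have ar21 : pairing (OmSigma g) (evec g (3 * r + 2)) (evec g 1) = -1 :=
    Px1 hg (mem32 hr) (by omega)
  have ar31 : pairing (OmSigma g) (evec g (3 * r + 3)) (evec g 1) = -1 :=
    Px1 hg (mem33 hr) (by omega)
  have ap21 : pairing (OmSigma g) (evec g (3 * (r + 1) + 2)) (evec g 1) = -1 :=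
    Px1 hg (mem32 hp) (by omega)
  have ap31 : pairing (OmSigma g) (evec g (3 * (r + 1) + 3)) (evec g 1) = -1 :=
    Px1 hg (mem33 hp) (by omega)
  have aq21 : pairing (OmSigma g) (evec g (3 * (r + 2) + 2)) (evec g 1) = -1 :=
    Px1 hg (mem32 hq) (by omega)
  have aq31 : pairing (OmSigma g) (evec g (3 * (r + 2) + 3)) (evec g 1) = -1 :=
    Px1 hg (mem33 hq) (by omega)
  have a01 : pairing (OmSigma g) (evec g 0) (evec g 1) = 1 := P0x hg mem1 (by norm_num)
  have a10 : pairing (OmSigma g) (evec g 1) (evec g 0) = -1 := Px0 hg mem1 (by norm_num)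
  have a00 : pairing (OmSigma g) (evec g 0) (evec g 0) = 0 := Pdiag mem0
  have a11 : pairing (OmSigma g) (evec g 1) (evec g 1) = 0 := Pdiag mem1
  -- within-pair values
  have arr : pairing (OmSigma g) (evec g (3 * r + 2)) (evec g (3 * r + 3)) = 1 :=
    Ppair hr2 hr
  have arrR : pairing (OmSigma g) (evec g (3 * r + 3)) (evec g (3 * r + 2)) = -1 :=
    PpairR hr2 hr
  have app : pairing (OmSigma g) (evec g (3 * (r + 1) + 2)) (evec g (3 * (r + 1) + 3)) = 1 :=
    Ppair (by omega) hp
  have appR : pairing (OmSigma g) (evec g (3 * (r + 1) + 3)) (evec g (3 * (r + 1) + 2)) = -1 :=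
    PpairR (by omega) hp
  have aqq : pairing (OmSigma g) (evec g (3 * (r + 2) + 2)) (evec g (3 * (r + 2) + 3)) = 1 :=
    Ppair (by omega) hq
  have aqqR : pairing (OmSigma g) (evec g (3 * (r + 2) + 3)) (evec g (3 * (r + 2) + 2)) = -1 :=
    PpairR (by omega) hq
  -- diagonals
  have dr2 : pairing (OmSigma g) (evec g (3 * r + 2)) (evec g (3 * r + 2)) = 0 :=
    Pdiag (mem32 hr)
  have dr3 : pairing (OmSigma g) (evec g (3 * r + 3)) (evec g (3 * r + 3)) = 0 :=
    Pdiag (mem33 hr)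
  have dp2 : pairing (OmSigma g) (evec g (3 * (r + 1) + 2)) (evec g (3 * (r + 1) + 2)) = 0 :=
    Pdiag (mem32 hp)
  have dp3 : pairing (OmSigma g) (evec g (3 * (r + 1) + 3)) (evec g (3 * (r + 1) + 3)) = 0 :=
    Pdiag (mem33 hp)
  have dq2 : pairing (OmSigma g) (evec g (3 * (r + 2) + 2)) (evec g (3 * (r + 2) + 2)) = 0 :=
    Pdiag (mem32 hq)
  have dq3 : pairing (OmSigma g) (evec g (3 * (r + 2) + 3)) (evec g (3 * (r + 2) + 3)) = 0 :=
    Pdiag (mem33 hq)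

  have zr2p2 : pairing (OmSigma g) (evec g (3 * r + 2)) (evec g (3 * (r + 1) + 2)) = 0 :=
    Pzlt (mem32 hr) (mem32 hp) (by omega) (by rw [pb32 (g := g) (k := (r + 1)) (by omega)]; have := (pb_lt_cross (g := g) (j := r) (k := (r + 1)) (by omega) (by omega)).1; omega)
  have zp2r2 : pairing (OmSigma g) (evec g (3 * (r + 1) + 2)) (evec g (3 * r + 2)) = 0 :=
    PzltR (mem32 hr) (mem32 hp) (by omega) (by rw [pb32 (g := g) (k := (r + 1)) (by omega)]; have := (pb_lt_cross (g := g) (j := r) (k := (r + 1)) (by omega) (by omega)).1; omega)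
  have zr2p3 : pairing (OmSigma g) (evec g (3 * r + 2)) (evec g (3 * (r + 1) + 3)) = 0 :=
    Pzlt (mem32 hr) (mem33 hp) (by omega) (by rw [pb33 (g := g) (k := (r + 1)) (by omega)]; have := (pb_lt_cross (g := g) (j := r) (k := (r + 1)) (by omega) (by omega)).1; omega)
  have zp3r2 : pairing (OmSigma g) (evec g (3 * (r + 1) + 3)) (evec g (3 * r + 2)) = 0 :=
    PzltR (mem32 hr) (mem33 hp) (by omega) (by rw [pb33 (g := g) (k := (r + 1)) (by omega)]; have := (pb_lt_cross (g := g) (j := r) (k := (r + 1)) (by omega) (by omega)).1; omega)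
  have zr3p2 : pairing (OmSigma g) (evec g (3 * r + 3)) (evec g (3 * (r + 1) + 2)) = 0 :=
    Pzlt (mem33 hr) (mem32 hp) (by omega) (by rw [pb32 (g := g) (k := (r + 1)) (by omega)]; have := (pb_lt_cross (g := g) (j := r) (k := (r + 1)) (by omega) (by omega)).2; omega)
  have zp2r3 : pairing (OmSigma g) (evec g (3 * (r + 1) + 2)) (evec g (3 * r + 3)) = 0 :=
    PzltR (mem33 hr) (mem32 hp) (by omega) (by rw [pb32 (g := g) (k := (r + 1)) (by omega)]; have := (pb_lt_cross (g := g) (j := r) (k := (r + 1)) (by omega) (by omega)).2; omega)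
  have zr3p3 : pairing (OmSigma g) (evec g (3 * r + 3)) (evec g (3 * (r + 1) + 3)) = 0 :=
    Pzlt (mem33 hr) (mem33 hp) (by omega) (by rw [pb33 (g := g) (k := (r + 1)) (by omega)]; have := (pb_lt_cross (g := g) (j := r) (k := (r + 1)) (by omega) (by omega)).2; omega)
  have zp3r3 : pairing (OmSigma g) (evec g (3 * (r + 1) + 3)) (evec g (3 * r + 3)) = 0 :=
    PzltR (mem33 hr) (mem33 hp) (by omega) (by rw [pb33 (g := g) (k := (r + 1)) (by omega)]; have := (pb_lt_cross (g := g) (j := r) (k := (r + 1)) (by omega) (by omega)).2; omega)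
  have zr2q2 : pairing (OmSigma g) (evec g (3 * r + 2)) (evec g (3 * (r + 2) + 2)) = 0 :=
    Pzlt (mem32 hr) (mem32 hq) (by omega) (by rw [pb32 (g := g) (k := (r + 2)) (by omega)]; have := (pb_lt_cross (g := g) (j := r) (k := (r + 2)) (by omega) (by omega)).1; omega)
  have zq2r2 : pairing (OmSigma g) (evec g (3 * (r + 2) + 2)) (evec g (3 * r + 2)) = 0 :=
    PzltR (mem32 hr) (mem32 hq) (by omega) (by rw [pb32 (g := g) (k := (r + 2)) (by omega)]; have := (pb_lt_cross (g := g) (j := r) (k := (r + 2)) (by omega) (by omega)).1; omega)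
  have zr2q3 : pairing (OmSigma g) (evec g (3 * r + 2)) (evec g (3 * (r + 2) + 3)) = 0 :=
    Pzlt (mem32 hr) (mem33 hq) (by omega) (by rw [pb33 (g := g) (k := (r + 2)) (by omega)]; have := (pb_lt_cross (g := g) (j := r) (k := (r + 2)) (by omega) (by omega)).1; omega)
  have zq3r2 : pairing (OmSigma g) (evec g (3 * (r + 2) + 3)) (evec g (3 * r + 2)) = 0 :=
    PzltR (mem32 hr) (mem33 hq) (by omega) (by rw [pb33 (g := g) (k := (r + 2)) (by omega)]; have := (pb_lt_cross (g := g) (j := r) (k := (r + 2)) (by omega) (by omega)).1; omega)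
  have zr3q2 : pairing (OmSigma g) (evec g (3 * r + 3)) (evec g (3 * (r + 2) + 2)) = 0 :=
    Pzlt (mem33 hr) (mem32 hq) (by omega) (by rw [pb32 (g := g) (k := (r + 2)) (by omega)]; have := (pb_lt_cross (g := g) (j := r) (k := (r + 2)) (by omega) (by omega)).2; omega)
  have zq2r3 : pairing (OmSigma g) (evec g (3 * (r + 2) + 2)) (evec g (3 * r + 3)) = 0 :=
    PzltR (mem33 hr) (mem32 hq) (by omega) (by rw [pb32 (g := g) (k := (r + 2)) (by omega)]; have := (pb_lt_cross (g := g) (j := r) (k := (r + 2)) (by omega) (by omega)).2; omega)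
  have zr3q3 : pairing (OmSigma g) (evec g (3 * r + 3)) (evec g (3 * (r + 2) + 3)) = 0 :=
    Pzlt (mem33 hr) (mem33 hq) (by omega) (by rw [pb33 (g := g) (k := (r + 2)) (by omega)]; have := (pb_lt_cross (g := g) (j := r) (k := (r + 2)) (by omega) (by omega)).2; omega)
  have zq3r3 : pairing (OmSigma g) (evec g (3 * (r + 2) + 3)) (evec g (3 * r + 3)) = 0 :=
    PzltR (mem33 hr) (mem33 hq) (by omega) (by rw [pb33 (g := g) (k := (r + 2)) (by omega)]; have := (pb_lt_cross (g := g) (j := r) (k := (r + 2)) (by omega) (by omega)).2; omega)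
  have zp2q2 : pairing (OmSigma g) (evec g (3 * (r + 1) + 2)) (evec g (3 * (r + 2) + 2)) = 0 :=
    Pzlt (mem32 hp) (mem32 hq) (by omega) (by rw [pb32 (g := g) (k := (r + 2)) (by omega)]; have := (pb_lt_cross (g := g) (j := (r + 1)) (k := (r + 2)) (by omega) (by omega)).1; omega)
  have zq2p2 : pairing (OmSigma g) (evec g (3 * (r + 2) + 2)) (evec g (3 * (r + 1) + 2)) = 0 :=
    PzltR (mem32 hp) (mem32 hq) (by omega) (by rw [pb32 (g := g) (k := (r + 2)) (by omega)]; have := (pb_lt_cross (g := g) (j := (r + 1)) (k := (r + 2)) (by omega) (by omega)).1; omega)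
  have zp2q3 : pairing (OmSigma g) (evec g (3 * (r + 1) + 2)) (evec g (3 * (r + 2) + 3)) = 0 :=
    Pzlt (mem32 hp) (mem33 hq) (by omega) (by rw [pb33 (g := g) (k := (r + 2)) (by omega)]; have := (pb_lt_cross (g := g) (j := (r + 1)) (k := (r + 2)) (by omega) (by omega)).1; omega)
  have zq3p2 : pairing (OmSigma g) (evec g (3 * (r + 2) + 3)) (evec g (3 * (r + 1) + 2)) = 0 :=
    PzltR (mem32 hp) (mem33 hq) (by omega) (by rw [pb33 (g := g) (k := (r + 2)) (by omega)]; have := (pb_lt_cross (g := g) (j := (r + 1)) (k := (r + 2)) (by omega) (by omega)).1; omega)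
  have zp3q2 : pairing (OmSigma g) (evec g (3 * (r + 1) + 3)) (evec g (3 * (r + 2) + 2)) = 0 :=
    Pzlt (mem33 hp) (mem32 hq) (by omega) (by rw [pb32 (g := g) (k := (r + 2)) (by omega)]; have := (pb_lt_cross (g := g) (j := (r + 1)) (k := (r + 2)) (by omega) (by omega)).2; omega)
  have zq2p3 : pairing (OmSigma g) (evec g (3 * (r + 2) + 2)) (evec g (3 * (r + 1) + 3)) = 0 :=
    PzltR (mem33 hp) (mem32 hq) (by omega) (by rw [pb32 (g := g) (k := (r + 2)) (by omega)]; have := (pb_lt_cross (g := g) (j := (r + 1)) (k := (r + 2)) (by omega) (by omega)).2; omega)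
  have zp3q3 : pairing (OmSigma g) (evec g (3 * (r + 1) + 3)) (evec g (3 * (r + 2) + 3)) = 0 :=
    Pzlt (mem33 hp) (mem33 hq) (by omega) (by rw [pb33 (g := g) (k := (r + 2)) (by omega)]; have := (pb_lt_cross (g := g) (j := (r + 1)) (k := (r + 2)) (by omega) (by omega)).2; omega)
  have zq3p3 : pairing (OmSigma g) (evec g (3 * (r + 2) + 3)) (evec g (3 * (r + 1) + 3)) = 0 :=
    PzltR (mem33 hp) (mem33 hq) (by omega) (by rw [pb33 (g := g) (k := (r + 2)) (by omega)]; have := (pb_lt_cross (g := g) (j := (r + 1)) (k := (r + 2)) (by omega) (by omega)).2; omega)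
  have hR0 : pairing (OmSigma g) (evec g 0) (RR g r) = 0 :=
    PR_zero _ r (fun j hj => P0_SV hg (by omega))
  have hR1 : pairing (OmSigma g) (evec g 1) (RR g r) = 0 :=
    PR_zero _ r (fun j hj => P1_SV hg (by omega))
  have hRr2 : pairing (OmSigma g) (evec g (3 * r + 2)) (RR g r) = 0 :=
    PR_zero _ r (fun j hj => Pk_SV2 (by omega) (by omega) (by omega) hr)
  have hRr3 : pairing (OmSigma g) (evec g (3 * r + 3)) (RR g r) = 0 :=
    PR_zero _ r (fun j hj => Pk_SV3 (by omega) (by omega) (by omega) hr)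
  have hRp2 : pairing (OmSigma g) (evec g (3 * (r + 1) + 2)) (RR g r) = 0 :=
    PR_zero _ r (fun j hj => Pk_SV2 (by omega) (by omega) (by omega) hp)
  have hRp3 : pairing (OmSigma g) (evec g (3 * (r + 1) + 3)) (RR g r) = 0 :=
    PR_zero _ r (fun j hj => Pk_SV3 (by omega) (by omega) (by omega) hp)
  have hRq2 : pairing (OmSigma g) (evec g (3 * (r + 2) + 2)) (RR g r) = 0 :=
    PR_zero _ r (fun j hj => Pk_SV2 (by omega) (by omega) (by omega) hq)
  have hRq3 : pairing (OmSigma g) (evec g (3 * (r + 2) + 3)) (RR g r) = 0 :=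
    PR_zero _ r (fun j hj => Pk_SV3 (by omega) (by omega) (by omega) hq)
  have hs0r : pairing (OmSigma g) (evec g 0) (SV g r) = 0 := P0_SV hg hr
  have hs1r : pairing (OmSigma g) (evec g 1) (SV g r) = 0 := P1_SV hg hr
  have hsr2r : pairing (OmSigma g) (evec g (3 * r + 2)) (SV g r) = 1 := by
    unfold SV; rw [pairing_add, pairing_neg_right, arr, dr2]; norm_num
  have hsr3r : pairing (OmSigma g) (evec g (3 * r + 3)) (SV g r) = 1 := by
    unfold SV; rw [pairing_add, pairing_neg_right, arrR, dr3]; norm_num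
  have hsp2r : pairing (OmSigma g) (evec g (3 * (r + 1) + 2)) (SV g r) = 0 :=
    Pk_SV2 (by omega) (by omega) hr hp
  have hsp3r : pairing (OmSigma g) (evec g (3 * (r + 1) + 3)) (SV g r) = 0 :=
    Pk_SV3 (by omega) (by omega) hr hp
  have hsq2r : pairing (OmSigma g) (evec g (3 * (r + 2) + 2)) (SV g r) = 0 :=
    Pk_SV2 (by omega) (by omega) hr hq
  have hsq3r : pairing (OmSigma g) (evec g (3 * (r + 2) + 3)) (SV g r) = 0 :=
    Pk_SV3 (by omega) (by omega) hr hq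
  -- T chain
  have t1 : CL g (evec g (3 * (r + 2) + 2) + -evec g 0) := eq2.add e0.neg (by simp only [pairing_add, pairing_sub, pairing_add_left, pairing_sub_left, pairing_neg_left, pairing_neg_right, a0r2, a0r3, a0p2, a0p3, a0q2, a0q3, ar20, ar30, ap20, ap30, aq20, aq30, a1r2, a1r3, a1p2, a1p3, a1q2, a1q3, ar21, ar31, ap21, ap31, aq21, aq31, a01, a10, a00, a11, arr, arrR, app, appR, aqq, aqqR, dr2, dr3, dp2, dp3, dq2, dq3, zr2p2, zp2r2, zr2p3, zp3r2, zr3p2, zp2r3, zr3p3, zp3r3, zr2q2, zq2r2, zr2q3, zq3r2, zr3q2, zq2r3, zr3q3, zq3r3, zp2q2, zq2p2, zp2q3, zq3p2, zp3q2, zq2p3, zp3q3, zq3p3, hR0, hR1, hRr2, hRr3, hRp2, hRp3, hRq2, hRq3, hs0r, hs1r, hsr2r, hsr3r, hsp2r, hsp3r, hsq2r, hsq3r]; norm_num)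
  have t2 : CL g (evec g (3 * (r + 1) + 2) + (evec g (3 * (r + 2) + 2) + -evec g 0)) := ep2.add t1 (by simp only [pairing_add, pairing_sub, pairing_add_left, pairing_sub_left, pairing_neg_left, pairing_neg_right, a0r2, a0r3, a0p2, a0p3, a0q2, a0q3, ar20, ar30, ap20, ap30, aq20, aq30, a1r2, a1r3, a1p2, a1p3, a1q2, a1q3, ar21, ar31, ap21, ap31, aq21, aq31, a01, a10, a00, a11, arr, arrR, app, appR, aqq, aqqR, dr2, dr3, dp2, dp3, dq2, dq3, zr2p2, zp2r2, zr2p3, zp3r2, zr3p2, zp2r3, zr3p3, zp3r3, zr2q2, zq2r2, zr2q3, zq3r2, zr3q2, zq2r3, zr3q3, zq3r3, zp2q2, zq2p2, zp2q3, zq3p2, zp3q2, zq2p3, zp3q3, zq3p3, hR0, hR1, hRr2, hRr3, hRp2, hRp3, hRq2, hRq3, hs0r, hs1r, hsr2r, hsr3r, hsp2r, hsp3r, hsq2r, hsq3r]; norm_num)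
  have t3 : CL g (evec g (3 * r + 3) - (evec g (3 * (r + 1) + 2) + (evec g (3 * (r + 2) + 2) + -evec g 0))) := er3.sub t2 (by simp only [pairing_add, pairing_sub, pairing_add_left, pairing_sub_left, pairing_neg_left, pairing_neg_right, a0r2, a0r3, a0p2, a0p3, a0q2, a0q3, ar20, ar30, ap20, ap30, aq20, aq30, a1r2, a1r3, a1p2, a1p3, a1q2, a1q3, ar21, ar31, ap21, ap31, aq21, aq31, a01, a10, a00, a11, arr, arrR, app, appR, aqq, aqqR, dr2, dr3, dp2, dp3, dq2, dq3, zr2p2, zp2r2, zr2p3, zp3r2, zr3p2, zp2r3, zr3p3, zp3r3, zr2q2, zq2r2, zr2q3, zq3r2, zr3q2, zq2r3, zr3q3, zq3r3, zp2q2, zq2p2, zp2q3, zq3p2, zp3q2, zq2p3, zp3q3, zq3p3, hR0, hR1, hRr2, hRr3, hRp2, hRp3, hRq2, hRq3, hs0r, hs1r, hsr2r, hsr3r, hsp2r, hsp3r, hsq2r, hsq3r]; norm_num)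
  have t4 : CL g (evec g 0 - evec g (3 * (r + 2) + 3)) := e0.sub eq3 a0q3
  have t5 : CL g (evec g (3 * r + 3) - (RR g r + SV g r)) := er3.sub hT (by simp only [pairing_add, pairing_sub, pairing_add_left, pairing_sub_left, pairing_neg_left, pairing_neg_right, a0r2, a0r3, a0p2, a0p3, a0q2, a0q3, ar20, ar30, ap20, ap30, aq20, aq30, a1r2, a1r3, a1p2, a1p3, a1q2, a1q3, ar21, ar31, ap21, ap31, aq21, aq31, a01, a10, a00, a11, arr, arrR, app, appR, aqq, aqqR, dr2, dr3, dp2, dp3, dq2, dq3, zr2p2, zp2r2, zr2p3, zp3r2, zr3p2, zp2r3, zr3p3, zp3r3, zr2q2, zq2r2, zr2q3, zq3r2, zr3q2, zq2r3, zr3q3, zq3r3, zp2q2, zq2p2, zp2q3, zq3p2, zp3q2, zq2p3, zp3q3, zq3p3, hR0, hR1, hRr2, hRr3, hRp2, hRp3, hRq2, hRq3, hs0r, hs1r, hsr2r, hsr3r, hsp2r, hsp3r, hsq2r, hsq3r]; norm_num)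
  have t6 : CL g ((evec g 0 - evec g (3 * (r + 2) + 3)) + (evec g (3 * r + 3) - (RR g r + SV g r))) := t4.add t5 (by simp only [pairing_add, pairing_sub, pairing_add_left, pairing_sub_left, pairing_neg_left, pairing_neg_right, a0r2, a0r3, a0p2, a0p3, a0q2, a0q3, ar20, ar30, ap20, ap30, aq20, aq30, a1r2, a1r3, a1p2, a1p3, a1q2, a1q3, ar21, ar31, ap21, ap31, aq21, aq31, a01, a10, a00, a11, arr, arrR, app, appR, aqq, aqqR, dr2, dr3, dp2, dp3, dq2, dq3, zr2p2, zp2r2, zr2p3, zp3r2, zr3p2, zp2r3, zr3p3, zp3r3, zr2q2, zq2r2, zr2q3, zq3r2, zr3q2, zq2r3, zr3q3, zq3r3, zp2q2, zq2p2, zp2q3, zq3p2, zp3q2, zq2p3, zp3q3, zq3p3, hR0, hR1, hRr2, hRr3, hRp2, hRp3, hRq2, hRq3, hs0r, hs1r, hsr2r, hsr3r, hsp2r, hsp3r, hsq2r, hsq3r]; norm_num)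
  have t7 : CL g (-evec g (3 * (r + 1) + 3) + ((evec g 0 - evec g (3 * (r + 2) + 3)) + (evec g (3 * r + 3) - (RR g r + SV g r)))) := ep3.neg.add t6 (by simp only [pairing_add, pairing_sub, pairing_add_left, pairing_sub_left, pairing_neg_left, pairing_neg_right, a0r2, a0r3, a0p2, a0p3, a0q2, a0q3, ar20, ar30, ap20, ap30, aq20, aq30, a1r2, a1r3, a1p2, a1p3, a1q2, a1q3, ar21, ar31, ap21, ap31, aq21, aq31, a01, a10, a00, a11, arr, arrR, app, appR, aqq, aqqR, dr2, dr3, dp2, dp3, dq2, dq3, zr2p2, zp2r2, zr2p3, zp3r2, zr3p2, zp2r3, zr3p3, zp3r3, zr2q2, zq2r2, zr2q3, zq3r2, zr3q2, zq2r3, zr3q3, zq3r3, zp2q2, zq2p2, zp2q3, zq3p2, zp3q2, zq2p3, zp3q3, zq3p3, hR0, hR1, hRr2, hRr3, hRp2, hRp3, hRq2, hRq3, hs0r, hs1r, hsr2r, hsr3r, hsp2r, hsp3r, hsq2r, hsq3r]; norm_num)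
  have t8 : CL g ((evec g (3 * r + 3) - (evec g (3 * (r + 1) + 2) + (evec g (3 * (r + 2) + 2) + -evec g 0))) - (-evec g (3 * (r + 1) + 3) + ((evec g 0 - evec g (3 * (r + 2) + 3)) + (evec g (3 * r + 3) - (RR g r + SV g r))))) := t3.sub t7 (by simp only [pairing_add, pairing_sub, pairing_add_left, pairing_sub_left, pairing_neg_left, pairing_neg_right, a0r2, a0r3, a0p2, a0p3, a0q2, a0q3, ar20, ar30, ap20, ap30, aq20, aq30, a1r2, a1r3, a1p2, a1p3, a1q2, a1q3, ar21, ar31, ap21, ap31, aq21, aq31, a01, a10, a00, a11, arr, arrR, app, appR, aqq, aqqR, dr2, dr3, dp2, dp3, dq2, dq3, zr2p2, zp2r2, zr2p3, zp3r2, zr3p2, zp2r3, zr3p3, zp3r3, zr2q2, zq2r2, zr2q3, zq3r2, zr3q2, zq2r3, zr3q3, zq3r3, zp2q2, zq2p2, zp2q3, zq3p2, zp3q2, zq2p3, zp3q3, zq3p3, hR0, hR1, hRr2, hRr3, hRp2, hRp3, hRq2, hRq3, hs0r, hs1r, hsr2r, hsr3r, hsp2r, hsp3r, hsq2r, hsq3r];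 norm_num)
  -- A chain
  have y1 : CL g (evec g (3 * (r + 1) + 2) + -evec g 1) := ep2.add e1.neg (by simp only [pairing_add, pairing_sub, pairing_add_left, pairing_sub_left, pairing_neg_left, pairing_neg_right, a0r2, a0r3, a0p2, a0p3, a0q2, a0q3, ar20, ar30, ap20, ap30, aq20, aq30, a1r2, a1r3, a1p2, a1p3, a1q2, a1q3, ar21, ar31, ap21, ap31, aq21, aq31, a01, a10, a00, a11, arr, arrR, app, appR, aqq, aqqR, dr2, dr3, dp2, dp3, dq2, dq3, zr2p2, zp2r2, zr2p3, zp3r2, zr3p2, zp2r3, zr3p3, zp3r3, zr2q2, zq2r2, zr2q3, zq3r2, zr3q2, zq2r3, zr3q3, zq3r3, zp2q2, zq2p2, zp2q3, zq3p2, zp3q2, zq2p3, zp3q3, zq3p3, hR0, hR1, hRr2, hRr3, hRp2, hRp3, hRq2, hRq3, hs0r, hs1r, hsr2r, hsr3r, hsp2r, hsp3r, hsq2r, hsq3r]; norm_num)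
  have y2 : CL g (evec g (3 * r + 3) - (evec g (3 * (r + 1) + 2) + -evec g 1)) := er3.sub y1 (by simp only [pairing_add, pairing_sub, pairing_add_left, pairing_sub_left, pairing_neg_left, pairing_neg_right, a0r2, a0r3, a0p2, a0p3, a0q2, a0q3, ar20, ar30, ap20, ap30, aq20, aq30, a1r2, a1r3, a1p2, a1p3, a1q2, a1q3, ar21, ar31, ap21, ap31, aq21, aq31, a01, a10, a00, a11, arr, arrR, app, appR, aqq, aqqR, dr2, dr3, dp2, dp3, dq2, dq3, zr2p2, zp2r2, zr2p3, zp3r2, zr3p2, zp2r3, zr3p3, zp3r3, zr2q2, zq2r2, zr2q3, zq3r2, zr3q2, zq2r3, zr3q3, zq3r3, zp2q2, zq2p2, zp2q3, zq3p2, zp3q2, zq2p3, zp3q3, zq3p3, hR0, hR1, hRr2, hRr3, hRp2, hRp3, hRq2, hRq3, hs0r, hs1r, hsr2r, hsr3r, hsp2r, hsp3r, hsq2r, hsq3r]; norm_num)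
  have y3 : CL g (evec g 1 + evec g (3 * r + 2)) := e1.add er2 a1r2
  have y4 : CL g (-evec g (3 * (r + 1) + 3) - (evec g 0 + RR g r)) := ep3.neg.sub hA (by simp only [pairing_add, pairing_sub, pairing_add_left, pairing_sub_left, pairing_neg_left, pairing_neg_right, a0r2, a0r3, a0p2, a0p3, a0q2, a0q3, ar20, ar30, ap20, ap30, aq20, aq30, a1r2, a1r3, a1p2, a1p3, a1q2, a1q3, ar21, ar31, ap21, ap31, aq21, aq31, a01, a10, a00, a11, arr, arrR, app, appR, aqq, aqqR, dr2, dr3, dp2, dp3, dq2, dq3, zr2p2, zp2r2, zr2p3, zp3r2, zr3p2, zp2r3, zr3p3, zp3r3, zr2q2, zq2r2, zr2q3, zq3r2, zr3q2, zq2r3, zr3q3, zq3r3, zp2q2, zq2p2, zp2q3, zq3p2, zp3q2, zq2p3, zp3q3, zq3p3, hR0, hR1, hRr2, hRr3, hRp2, hRp3, hRq2, hRq3, hs0r, hs1r, hsr2r, hsr3r, hsp2r, hsp3r, hsq2r, hsq3r]; norm_num)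
  have y5 : CL g ((evec g 1 + evec g (3 * r + 2)) + (-evec g (3 * (r + 1) + 3) - (evec g 0 + RR g r))) := y3.add y4 (by simp only [pairing_add, pairing_sub, pairing_add_left, pairing_sub_left, pairing_neg_left, pairing_neg_right, a0r2, a0r3, a0p2, a0p3, a0q2, a0q3, ar20, ar30, ap20, ap30, aq20, aq30, a1r2, a1r3, a1p2, a1p3, a1q2, a1q3, ar21, ar31, ap21, ap31, aq21, aq31, a01, a10, a00, a11, arr, arrR, app, appR, aqq, aqqR, dr2, dr3, dp2, dp3, dq2, dq3, zr2p2, zp2r2, zr2p3, zp3r2, zr3p2, zp2r3, zr3p3, zp3r3, zr2q2, zq2r2, zr2q3, zq3r2, zr3q2, zq2r3, zr3q3, zq3r3, zp2q2, zq2p2, zp2q3, zq3p2, zp3q2, zq2p3, zp3q3, zq3p3, hR0, hR1, hRr2, hRr3, hRp2, hRp3, hRq2, hRq3, hs0r, hs1r, hsr2r, hsr3r, hsp2r, hsp3r, hsq2r, hsq3r]; norm_num)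
  have y6 : CL g ((evec g (3 * r + 3) - (evec g (3 * (r + 1) + 2) + -evec g 1)) - ((evec g 1 + evec g (3 * r + 2)) + (-evec g (3 * (r + 1) + 3) - (evec g 0 + RR g r)))) := y2.sub y5 (by simp only [pairing_add, pairing_sub, pairing_add_left, pairing_sub_left, pairing_neg_left, pairing_neg_right, a0r2, a0r3, a0p2, a0p3, a0q2, a0q3, ar20, ar30, ap20, ap30, aq20, aq30, a1r2, a1r3, a1p2, a1p3, a1q2, a1q3, ar21, ar31, ap21, ap31, aq21, aq31, a01, a10, a00, a11, arr, arrR, app, appR, aqq, aqqR, dr2, dr3, dp2, dp3, dq2, dq3, zr2p2, zp2r2, zr2p3, zp3r2, zr3p2, zp2r3, zr3p3, zp3r3, zr2q2, zq2r2, zr2q3, zq3r2, zr3q2, zq2r3, zr3q3, zq3r3, zp2q2, zq2p2, zp2q3, zq3p2, zp3q2, zq2p3, zp3q3, zq3p3, hR0, hR1, hRr2, hRr3, hRp2, hRp3, hRq2, hRq3, hs0r, hs1r, hsr2r, hsr3r, hsp2r, hsp3r, hsq2r, hsq3r]; norm_num)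
  -- B chain
  have z1 : CL g (evec g (3 * (r + 1) + 2) + -evec g 0) := ep2.add e0.neg (by simp only [pairing_add, pairing_sub, pairing_add_left, pairing_sub_left, pairing_neg_left, pairing_neg_right, a0r2, a0r3, a0p2, a0p3, a0q2, a0q3, ar20, ar30, ap20, ap30, aq20, aq30, a1r2, a1r3, a1p2, a1p3, a1q2, a1q3, ar21, ar31, ap21, ap31, aq21, aq31, a01, a10, a00, a11, arr, arrR, app, appR, aqq, aqqR, dr2, dr3, dp2, dp3, dq2, dq3, zr2p2, zp2r2, zr2p3, zp3r2, zr3p2, zp2r3, zr3p3, zp3r3, zr2q2, zq2r2, zr2q3, zq3r2, zr3q2, zq2r3, zr3q3, zq3r3, zp2q2, zq2p2, zp2q3, zq3p2, zp3q2, zq2p3, zp3q3, zq3p3, hR0, hR1, hRr2, hRr3, hRp2, hRp3, hRq2, hRq3, hs0r, hs1r, hsr2r, hsr3r, hsp2r, hsp3r, hsq2r, hsq3r]; norm_num)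
  have z2 : CL g (evec g (3 * r + 3) - (evec g (3 * (r + 1) + 2) + -evec g 0)) := er3.sub z1 (by simp only [pairing_add, pairing_sub, pairing_add_left, pairing_sub_left, pairing_neg_left, pairing_neg_right, a0r2, a0r3, a0p2, a0p3, a0q2, a0q3, ar20, ar30, ap20, ap30, aq20, aq30, a1r2, a1r3, a1p2, a1p3, a1q2, a1q3, ar21, ar31, ap21, ap31, aq21, aq31, a01, a10, a00, a11, arr, arrR, app, appR, aqq, aqqR, dr2, dr3, dp2, dp3, dq2, dq3, zr2p2, zp2r2, zr2p3, zp3r2, zr3p2, zp2r3, zr3p3, zp3r3, zr2q2, zq2r2, zr2q3, zq3r2, zr3q2, zq2r3, zr3q3, zq3r3, zp2q2, zq2p2, zp2q3, zq3p2, zp3q2, zq2p3, zp3q3, zq3p3, hR0, hR1, hRr2, hRr3, hRp2, hRp3, hRq2, hRq3, hs0r, hs1r, hsr2r, hsr3r, hsp2r, hsp3r, hsq2r, hsq3r]; norm_num)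
  have z3 : CL g (evec g (3 * (r + 1) + 3) + -evec g 0) := ep3.add e0.neg (by simp only [pairing_add, pairing_sub, pairing_add_left, pairing_sub_left, pairing_neg_left, pairing_neg_right, a0r2, a0r3, a0p2, a0p3, a0q2, a0q3, ar20, ar30, ap20, ap30, aq20, aq30, a1r2, a1r3, a1p2, a1p3, a1q2, a1q3, ar21, ar31, ap21, ap31, aq21, aq31, a01, a10, a00, a11, arr, arrR, app, appR, aqq, aqqR, dr2, dr3, dp2, dp3, dq2, dq3, zr2p2, zp2r2, zr2p3, zp3r2, zr3p2, zp2r3, zr3p3, zp3r3, zr2q2, zq2r2, zr2q3, zq3r2, zr3q2, zq2r3, zr3q3, zq3r3, zp2q2, zq2p2, zp2q3, zq3p2, zp3q2, zq2p3, zp3q3, zq3p3, hR0, hR1, hRr2, hRr3, hRp2, hRp3, hRq2, hRq3, hs0r, hs1r, hsr2r, hsr3r, hsp2r, hsp3r, hsq2r, hsq3r]; norm_num)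
  have z4 : CL g (-(evec g 1 + RR g r)) := hB.neg
  have z5 : CL g (evec g (3 * r + 2) + (-(evec g 1 + RR g r))) := er2.add z4 (by simp only [pairing_add, pairing_sub, pairing_add_left, pairing_sub_left, pairing_neg_left, pairing_neg_right, a0r2, a0r3, a0p2, a0p3, a0q2, a0q3, ar20, ar30, ap20, ap30, aq20, aq30, a1r2, a1r3, a1p2, a1p3, a1q2, a1q3, ar21, ar31, ap21, ap31, aq21, aq31, a01, a10, a00, a11, arr, arrR, app, appR, aqq, aqqR, dr2, dr3, dp2, dp3, dq2, dq3, zr2p2, zp2r2, zr2p3, zp3r2, zr3p2, zp2r3, zr3p3, zp3r3, zr2q2, zq2r2, zr2q3, zq3r2, zr3q2, zq2r3, zr3q3, zq3r3, zp2q2, zq2p2, zp2q3, zq3p2, zp3q2, zq2p3, zp3q3, zq3p3, hR0, hR1, hRr2, hRr3, hRp2, hRp3, hRq2, hRq3, hs0r, hs1r, hsr2r, hsr3r, hsp2r, hsp3r, hsq2r, hsq3r]; norm_num)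
  have z6 : CL g ((evec g (3 * (r + 1) + 3) + -evec g 0) - (evec g (3 * r + 2) + (-(evec g 1 + RR g r)))) := z3.sub z5 (by simp only [pairing_add, pairing_sub, pairing_add_left, pairing_sub_left, pairing_neg_left, pairing_neg_right, a0r2, a0r3, a0p2, a0p3, a0q2, a0q3, ar20, ar30, ap20, ap30, aq20, aq30, a1r2, a1r3, a1p2, a1p3, a1q2, a1q3, ar21, ar31, ap21, ap31, aq21, aq31, a01, a10, a00, a11, arr, arrR, app, appR, aqq, aqqR, dr2, dr3, dp2, dp3, dq2, dq3, zr2p2, zp2r2, zr2p3, zp3r2, zr3p2, zp2r3, zr3p3, zp3r3, zr2q2, zq2r2, zr2q3, zq3r2, zr3q2, zq2r3, zr3q3, zq3r3, zp2q2, zq2p2, zp2q3, zq3p2, zp3q2, zq2p3, zp3q3, zq3p3, hR0, hR1, hRr2, hRr3, hRp2, hRp3, hRq2, hRq3, hs0r, hs1r, hsr2r, hsr3r, hsp2r, hsp3r, hsq2r, hsq3r]; norm_num)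
  have z7 : CL g ((evec g (3 * r + 3) - (evec g (3 * (r + 1) + 2) + -evec g 0)) + ((evec g (3 * (r + 1) + 3) + -evec g 0) - (evec g (3 * r + 2) + (-(evec g 1 + RR g r))))) := z2.add z6 (by simp only [pairing_add, pairing_sub, pairing_add_left, pairing_sub_left, pairing_neg_left, pairing_neg_right, a0r2, a0r3, a0p2, a0p3, a0q2, a0q3, ar20, ar30, ap20, ap30, aq20, aq30, a1r2, a1r3, a1p2, a1p3, a1q2, a1q3, ar21, ar31, ap21, ap31, aq21, aq31, a01, a10, a00, a11, arr, arrR, app, appR, aqq, aqqR, dr2, dr3, dp2, dp3, dq2, dq3, zr2p2, zp2r2, zr2p3, zp3r2, zr3p2, zp2r3, zr3p3, zp3r3, zr2q2, zq2r2, zr2q3, zq3r2, zr3q2, zq2r3, zr3q3, zq3r3, zp2q2, zq2p2, zp2q3, zq3p2, zp3q2, zq2p3, zp3q3, zq3p3, hR0, hR1, hRr2, hRr3, hRp2, hRp3, hRq2, hRq3, hs0r, hs1r, hsr2r, hsr3r, hsp2r, hsp3r, hsq2r, hsq3r]; norm_num)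
  -- conclude
  have hRe : RR g (r + 2) = RR g r + SV g r + SV g (r + 1) := by
    rw [show r + 2 = r + 1 + 1 from rfl, RR_succ, RR_succ]
  refine ⟨?_, ?_, ?_⟩
  · have heq : ((evec g (3 * r + 3) - (evec g (3 * (r + 1) + 2) + -evec g 1)) - ((evec g 1 + evec g (3 * r + 2)) + (-evec g (3 * (r + 1) + 3) - (evec g 0 + RR g r)))) = evec g 0 + RR g (r + 2) := by
      rw [hRe]; unfold SV; abel
    exact heq ▸ y6
  · have heq : ((evec g (3 * r + 3) - (evec g (3 * (r + 1) + 2) + -evec g 0)) + ((evec g (3 * (r + 1) + 3) + -evec g 0) - (evec g (3 * r + 2) + (-(evec g 1 + RR g r))))) = evec g 1 + RR g (r + 2) := by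
      rw [hRe]; unfold SV; abel
    exact heq ▸ z7
  · have heq : ((evec g (3 * r + 3) - (evec g (3 * (r + 1) + 2) + (evec g (3 * (r + 2) + 2) + -evec g 0))) - (-evec g (3 * (r + 1) + 3) + ((evec g 0 - evec g (3 * (r + 2) + 3)) + (evec g (3 * r + 3) - (RR g r + SV g r))))) = RR g (r + 2) + SV g (r + 2) := by
      rw [hRe]; unfold SV; abel
    exact heq ▸ t8

lemma RR_two {g : ℕ} : RR g 2 = SV g 0 + SV g 1 := by
  unfold RR; rw [Finset.sum_range_succ, Finset.sum_range_one]

lemma ABT {g : ℕ} (hg : 4 ≤ g) : ∀ m, 1 ≤ m → 2 * m + 2 ≤ g →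
    CL g (evec g 0 + RR g (2 * m)) ∧ CL g (evec g 1 + RR g (2 * m)) ∧
      CL g (RR g (2 * m) + SV g (2 * m)) := by
  intro m
  induction m with
  | zero => intro h _; exact absurd h (by norm_num)
  | succ n ih =>
      intro _ hb
      by_cases hn : n = 0
      · subst hn
        obtain ⟨hA, hB, hT⟩ := base1 hg
        have h2 : 2 * (0 + 1) = 2 := by norm_num
        rw [h2, RR_two]
        exact ⟨hA, hB, hT⟩
      · have hn1 : 1 ≤ n := by omega
        obtain ⟨hA, hB, hT⟩ := ih hn1 (by omega)
        have hs := step hg (2 * n) (by omega) (by omega) hA hB hT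
        have he : 2 * (n + 1) = 2 * n + 2 := by ring
        rw [he]
        exact hs

end L39

/-- Lemma 3.9 of the paper: if `β ≡ 3 (mod 6)` and `3 ≤ β ≤ 3g-3`, then
`(-e_2 + e_3) + (-e_5 + e_6) + ⋯ + (-e_{β-1} + e_β)` belongs to the Ω-closure of the
standard basis, for the form of `σ^{(g)}`, `g ≥ 4`. -/
theorem statement9 (g : ℕ) (hg : 4 ≤ g) (β : ℕ) (hβ3 : 3 ≤ β) (hβ : β ≤ 3 * g - 3)
    (hmod : β % 6 = 3) :
    OmegaClosure (pairing (OmSigma g)) (Set.range fun a : Idx g => evec g (a : ℕ))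
      (∑ k ∈ (Finset.range (g - 1)).filter (fun k => 3 * k + 3 ≤ β),
        (-evec g (3 * k + 2) + evec g (3 * k + 3))) := by
  classical
  obtain ⟨M, hM⟩ : ∃ M, β = 6 * M + 3 := ⟨β / 6, by omega⟩
  have hfil : (Finset.range (g - 1)).filter (fun k => 3 * k + 3 ≤ β) =
      Finset.range (2 * M + 1) := by
    ext k
    simp only [Finset.mem_filter, Finset.mem_range]
    omega
  rw [hfil]
  show L39.CL g (L39.RR g (2 * M + 1))
  rcases Nat.eq_zero_or_pos M with h0 | h1
  · subst h0
    have h23 : pairing (OmSigma g) (evec g 2) (evec g 3) = 1 := by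
      rw [L39.pairing_evec 2 3 (L39.mem2 hg) (L39.mem3 hg), L39.pb2, L39.pb3]; norm_num
    have c : L39.CL g (evec g 2 - evec g 3) :=
      (L39.clE (L39.mem2 hg)).sub (L39.clE (L39.mem3 hg)) h23
    have heq : -(evec g 2 - evec g 3) = L39.RR g (2 * 0 + 1) := by
      unfold L39.RR L39.SV; rw [Finset.sum_range_one]; norm_num; abel
    exact heq ▸ c.neg
  · obtain ⟨_, _, hT⟩ := L39.ABT hg M h1 (by omega)
    have heq : L39.RR g (2 * M) + L39.SV g (2 * M) = L39.RR g (2 * M + 1) :=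
      (L39.RR_succ _).symm
    exact heq ▸ hT
end

section
/- Let d ≥ 6 be even and let Q be the quadratic form of the permutation τ^{(d)}. Then the number of nonsingular vectors satisfies: |{u ∈ (ℤ/2ℤ)^d : Q(u) = 1}| = 2^{d−1} + 2^{(d−2)/2} if d mod 8 ∈ {0, 6}, and |{u ∈ (ℤ/2ℤ)^d : Q(u) = 1}| = 2^{d−1} − 2^{(d−2)/2} if d mod 8 ∈ {2, 4}. -/
open Matrix

/-- The alphabet `A = {1, …, d}`. -/
def AsetD (d : ℕ) : Finset ℕ := Finset.Icc 1 d

/-- The index type of the alphabet. -/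
abbrev IdxD (d : ℕ) := ↥(AsetD d)

/-- The bottom bijection of the permutation `τ^{(d)}` (top row `1 2 … d`, bottom row
`d d-1 … 6 3 2 5 4 1`). -/
def pbtauD (d : ℕ) (n : ℕ) : ℕ :=
  if n = 1 then d
  else if n = 2 then d - 3
  else if n = 3 then d - 4
  else if n = 4 then d - 1
  else if n = 5 then d - 2
  else d + 1 - n

/-- The alternating form `Ω` of the permutation `τ^{(d)}`. -/
def OmD (d : ℕ) : Matrix (IdxD d) (IdxD d) ℤ := fun a b =>
  if (a : ℕ) < (b : ℕ) ∧ pbtauD d (b : ℕ) < pbtauD d (a : ℕ) then 1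
  else if (b : ℕ) < (a : ℕ) ∧ pbtauD d (a : ℕ) < pbtauD d (b : ℕ) then -1
  else 0

lemma OmD_skew (d : ℕ) : (OmD d)ᵀ = -(OmD d) := by
  ext a b
  simp only [Matrix.transpose_apply, Matrix.neg_apply, OmD]
  split_ifs <;> omega

/-- The mod-2 reduction `Ω̄` of the alternating form of `τ^{(d)}`. -/
def ObarD (d : ℕ) : Matrix (IdxD d) (IdxD d) (ZMod 2) :=
  (OmD d).map (Int.cast : ℤ → ZMod 2)

/-- The standard basis vector `ē_m` of `(ℤ/2ℤ)^A`. -/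
def ebarD (d : ℕ) (m : ℕ) : IdxD d → ZMod 2 := fun a => if (a : ℕ) = m then 1 else 0

/-- The quadratic form `Q(u) = Σ_{α<β} u_α Ω̄_{αβ} u_β + Σ_α u_α` of the permutation
`τ^{(d)}`. -/
def Qd (d : ℕ) (u : IdxD d → ZMod 2) : ZMod 2 :=
  (∑ a : IdxD d, ∑ b : IdxD d,
      if (a : ℕ) < (b : ℕ) then u a * ObarD d a b * u b else 0)
    + ∑ a : IdxD d, u a

namespace St19

def gi : GaussianInt := Zsqrtd.sqrtd
def sgn2 (x : ZMod 2) : ℤ := 1 - 2 * x.val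
def reHom : GaussianInt →+ ℤ :=
  { toFun := Zsqrtd.re, map_zero' := rfl, map_add' := fun _ _ => rfl }

lemma sgn2_add (x y : ZMod 2) : sgn2 (x + y) = sgn2 x * sgn2 y := by revert x y; decide
lemma gi_pow_four : gi ^ 4 = 1 := by decide
lemma val_cast (x : ZMod 2) : ((x.val : ℕ) : ZMod 2) = x := by revert x; decide

lemma sum_zmod2 {M : Type*} [AddCommMonoid M] (f : ZMod 2 → M) :
    ∑ x : ZMod 2, f x = f 0 + f 1 := Fin.sum_univ_two f

lemma mem_bounds {d : ℕ} (a : IdxD d) : 1 ≤ (a:ℕ) ∧ (a:ℕ) ≤ d :=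
  Finset.mem_Icc.mp a.2

lemma pbtau_lt {d x y : ℕ} (hd : 6 ≤ d) (h1 : 1 ≤ x) (hxy : x < y) (h2 : y ≤ d) :
    pbtauD d y < pbtauD d x ↔ ¬((x = 2 ∨ x = 3) ∧ (y = 4 ∨ y = 5)) := by
  simp only [pbtauD]
  split_ifs <;> omega

lemma Obar_struct {d : ℕ} (hd : 6 ≤ d) (a b : IdxD d) (hab : (a:ℕ) < (b:ℕ)) :
    ObarD d a b = 1 + (if (a:ℕ) = 2 ∨ (a:ℕ) = 3 then 1 else 0) *
      (if (b:ℕ) = 4 ∨ (b:ℕ) = 5 then (1 : ZMod 2) else 0) := by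
  obtain ⟨ha1, ha2⟩ := mem_bounds a
  obtain ⟨hb1, hb2⟩ := mem_bounds b
  have hlt := pbtau_lt hd ha1 hab hb2
  simp only [ObarD, Matrix.map_apply, OmD, hab, true_and, not_lt_of_gt hab, false_and, if_false]
  by_cases hc : (((a:ℕ) = 2 ∨ (a:ℕ) = 3) ∧ ((b:ℕ) = 4 ∨ (b:ℕ) = 5))
  · rw [if_neg (by rw [hlt]; tauto), if_pos hc.1, if_pos hc.2]
    decide
  · rw [if_pos (by rw [hlt]; tauto)]
    rcases Classical.em ((a:ℕ) = 2 ∨ (a:ℕ) = 3) with h1 | h1 <;>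
      rcases Classical.em ((b:ℕ) = 4 ∨ (b:ℕ) = 5) with h2 | h2 <;>
      simp [h1, h2]
    omega

lemma Qd_eq {d : ℕ} (hd : 6 ≤ d) (u : IdxD d → ZMod 2) :
    Qd d u = ((∑ a : IdxD d, ∑ b : IdxD d, if (a:ℕ) < (b:ℕ) then u a * u b else 0)
        + ∑ a : IdxD d, u a)
      + (∑ a : IdxD d, u a * (if (a:ℕ) = 2 ∨ (a:ℕ) = 3 then 1 else 0))
        * (∑ b : IdxD d, u b * (if (b:ℕ) = 4 ∨ (b:ℕ) = 5 then 1 else 0)) := by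
  have h1 : ∀ a b : IdxD d,
      (if (a:ℕ) < (b:ℕ) then u a * ObarD d a b * u b else 0)
        = (if (a:ℕ) < (b:ℕ) then u a * u b else 0)
          + (u a * (if (a:ℕ) = 2 ∨ (a:ℕ) = 3 then 1 else 0))
            * (u b * (if (b:ℕ) = 4 ∨ (b:ℕ) = 5 then 1 else 0)) := by
    intro a b
    by_cases hab : (a:ℕ) < (b:ℕ)
    · rw [if_pos hab, if_pos hab, Obar_struct hd a b hab]; ring
    · rw [if_neg hab, if_neg hab]
      have hz : (if (a:ℕ) = 2 ∨ (a:ℕ) = 3 then (1:ZMod 2) else 0)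
          * (if (b:ℕ) = 4 ∨ (b:ℕ) = 5 then (1:ZMod 2) else 0) = 0 := by
        split_ifs with hA hB
        · omega
        · exact mul_zero _
        · exact zero_mul _
        · exact zero_mul _
      calc (0:ZMod 2) = 0 + u a * u b *
            ((if (a:ℕ) = 2 ∨ (a:ℕ) = 3 then (1:ZMod 2) else 0)
              * (if (b:ℕ) = 4 ∨ (b:ℕ) = 5 then (1:ZMod 2) else 0)) := by
            rw [hz, mul_zero, add_zero]
        _ = _ := by ring
  calc Qd d u = (∑ a : IdxD d, ∑ b : IdxD d,
        ((if (a:ℕ) < (b:ℕ) then u a * u b else 0)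
          + (u a * (if (a:ℕ) = 2 ∨ (a:ℕ) = 3 then 1 else 0))
            * (u b * (if (b:ℕ) = 4 ∨ (b:ℕ) = 5 then 1 else 0))))
      + ∑ a : IdxD d, u a := by
        unfold Qd
        congr 1
        exact Finset.sum_congr rfl fun a _ => Finset.sum_congr rfl fun b _ => h1 a b
    _ = _ := by
        rw [show (∑ a : IdxD d, ∑ b : IdxD d,
          ((if (a:ℕ) < (b:ℕ) then u a * u b else 0)
            + (u a * (if (a:ℕ) = 2 ∨ (a:ℕ) = 3 then 1 else 0))
              * (u b * (if (b:ℕ) = 4 ∨ (b:ℕ) = 5 then 1 else 0))))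
          = (∑ a : IdxD d, ∑ b : IdxD d, if (a:ℕ) < (b:ℕ) then u a * u b else 0)
            + (∑ a : IdxD d, u a * (if (a:ℕ) = 2 ∨ (a:ℕ) = 3 then 1 else 0))
              * (∑ b : IdxD d, u b * (if (b:ℕ) = 4 ∨ (b:ℕ) = 5 then 1 else 0)) from ?_]
        · ring
        · rw [Finset.sum_mul_sum]
          rw [← Finset.sum_add_distrib]
          refine Finset.sum_congr rfl fun a _ => ?_
          rw [← Finset.sum_add_distrib]

lemma sq_sum {d : ℕ} (v : IdxD d → ℕ) (hv : ∀ a, v a ≤ 1) :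
    (∑ a : IdxD d, v a) * (∑ a : IdxD d, v a)
      = 2 * (∑ a : IdxD d, ∑ b : IdxD d, if (a:ℕ) < (b:ℕ) then v a * v b else 0)
        + ∑ a : IdxD d, v a := by
  rw [Finset.sum_mul_sum]
  have h1 : ∀ a b : IdxD d, v a * v b
      = (if (a:ℕ) < (b:ℕ) then v a * v b else 0)
        + ((if (b:ℕ) < (a:ℕ) then v a * v b else 0)
        + (if a = b then v a * v b else 0)) := by
    intro a b
    rcases lt_trichotomy (a:ℕ) (b:ℕ) with h | h | h
    · rw [if_pos h, if_neg (by omega), if_neg (by exact fun he => by subst he; omega)]; ring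
    · have : a = b := Subtype.ext h
      subst this
      simp
    · rw [if_neg (by omega), if_pos h, if_neg (by exact fun he => by subst he; omega)]; ring
  calc (∑ a : IdxD d, ∑ b : IdxD d, v a * v b)
      = ∑ a : IdxD d, ∑ b : IdxD d,
        ((if (a:ℕ) < (b:ℕ) then v a * v b else 0)
          + ((if (b:ℕ) < (a:ℕ) then v a * v b else 0)
          + (if a = b then v a * v b else 0))) :=
        Finset.sum_congr rfl fun a _ => Finset.sum_congr rfl fun b _ => h1 a b
    _ = (∑ a : IdxD d, ∑ b : IdxD d, if (a:ℕ) < (b:ℕ) then v a * v b else 0)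
        + ((∑ a : IdxD d, ∑ b : IdxD d, if (b:ℕ) < (a:ℕ) then v a * v b else 0)
        + (∑ a : IdxD d, ∑ b : IdxD d, if a = b then v a * v b else 0)) := by
        rw [← Finset.sum_add_distrib, ← Finset.sum_add_distrib]
        exact Finset.sum_congr rfl fun a _ => by
          rw [← Finset.sum_add_distrib, ← Finset.sum_add_distrib]
    _ = _ := by
        have h2 : (∑ a : IdxD d, ∑ b : IdxD d, if (b:ℕ) < (a:ℕ) then v a * v b else 0)
            = ∑ a : IdxD d, ∑ b : IdxD d, if (a:ℕ) < (b:ℕ) then v a * v b else 0 := by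
          rw [Finset.sum_comm]
          exact Finset.sum_congr rfl fun a _ => Finset.sum_congr rfl fun b _ => by
            rcases Classical.em ((a:ℕ) < (b:ℕ)) with h | h
            · rw [if_pos h, if_pos h, mul_comm]
            · rw [if_neg h, if_neg h]
        have h3 : (∑ a : IdxD d, ∑ b : IdxD d, if a = b then v a * v b else 0)
            = ∑ a : IdxD d, v a := by
          refine Finset.sum_congr rfl fun a _ => ?_
          rw [Finset.sum_ite_eq (Finset.univ) a (fun b => v a * v b), if_pos (Finset.mem_univ a)]
          rcases Nat.le_one_iff_eq_zero_or_eq_one.mp (hv a) with h | h <;> rw [h]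
        rw [h2, h3]; ring

lemma gi_pow_mod (m : ℕ) : gi ^ m = gi ^ (m % 4) := by
  conv_lhs => rw [← Nat.div_add_mod m 4]
  rw [pow_add, pow_mul, gi_pow_four, one_pow, one_mul]

lemma reHom_apply (z : GaussianInt) : reHom z = z.re := rfl

lemma key (P w : ℕ) (h : 2 * P + w = w * w) (e1 e2 : ZMod 2) :
    2 * sgn2 (((P : ℕ) : ZMod 2) + ((w : ℕ) : ZMod 2) + e1 * e2)
      = ((1 + gi) * gi ^ w *
          ((1 + sgn2 e1 + sgn2 e2 - sgn2 e1 * sgn2 e2 : ℤ) : GaussianInt)).re := by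
  have hgiw : gi ^ w = gi ^ (w % 4) := gi_pow_mod w
  have hP2 : ((P : ℕ) : ZMod 2) = ((P % 2 : ℕ) : ZMod 2) := (ZMod.natCast_mod P 2).symm
  have hw2 : ((w : ℕ) : ZMod 2) = ((w % 2 : ℕ) : ZMod 2) := (ZMod.natCast_mod w 2).symm
  have hr4 : w % 4 < 4 := Nat.mod_lt _ (by norm_num)
  have hde : w = 4 * (w / 4) + w % 4 := (Nat.div_add_mod w 4).symm
  have hsq : w * w = 16 * ((w/4) * (w/4)) + 8 * ((w/4) * (w % 4)) + (w % 4) * (w % 4) := by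
    conv_lhs => rw [hde]
    ring
  rw [hsq] at h
  rw [hgiw, hP2, hw2]
  set q := w / 4 with hq
  set r := w % 4 with hr
  have hw2r : w % 2 = r % 2 := by omega
  rw [hw2r]
  generalize hQQ : q * q = QQ at h
  generalize hQR : q * r = QR at h
  interval_cases r
  · have : P % 2 = 0 := by omega
    rw [this]; revert e1 e2; decide
  · have : P % 2 = 0 := by omega
    rw [this]; revert e1 e2; decide
  · have : P % 2 = 1 := by omega
    rw [this]; revert e1 e2; decide
  · have : P % 2 = 1 := by omega
    rw [this]; revert e1 e2; decide

lemma bigsum {d : ℕ} (T : Finset ℕ) :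
    (∑ u : IdxD d → ZMod 2, (gi ^ (∑ a : IdxD d, (u a).val)
        * ∏ a : IdxD d, (if (a:ℕ) ∈ T then ((sgn2 (u a) : ℤ) : GaussianInt) else 1)))
      = (1 - gi) ^ ((AsetD d ∩ T).card) * (1 + gi) ^ (d - (AsetD d ∩ T).card) := by
  have h1 : ∀ u : IdxD d → ZMod 2,
      gi ^ (∑ a : IdxD d, (u a).val)
          * ∏ a : IdxD d, (if (a:ℕ) ∈ T then ((sgn2 (u a) : ℤ) : GaussianInt) else 1)
        = ∏ a : IdxD d, (gi ^ (u a).val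
            * (if (a:ℕ) ∈ T then ((sgn2 (u a) : ℤ) : GaussianInt) else 1)) := by
    intro u
    rw [Finset.prod_mul_distrib, ← Finset.prod_pow_eq_pow_sum]
  rw [Finset.sum_congr rfl fun u _ => h1 u]
  rw [← Fintype.prod_sum (fun (a : IdxD d) (x : ZMod 2) =>
      gi ^ x.val * (if (a:ℕ) ∈ T then ((sgn2 x : ℤ) : GaussianInt) else 1))]
  have h2 : ∀ a : IdxD d, (∑ x : ZMod 2,
      gi ^ x.val * (if (a:ℕ) ∈ T then ((sgn2 x : ℤ) : GaussianInt) else 1))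
      = (if (a:ℕ) ∈ T then 1 - gi else 1 + gi) := by
    intro a
    rw [sum_zmod2]
    by_cases h : (a:ℕ) ∈ T <;> simp [h, sgn2] <;> ring_nf <;> decide
  rw [Finset.prod_congr rfl fun a _ => h2 a]
  rw [Finset.prod_ite _ _]
  rw [Finset.prod_const, Finset.prod_const]
  have huniv : (Finset.univ : Finset (IdxD d)) = (AsetD d).attach := Finset.univ_eq_attach _
  have hc1 : (Finset.univ.filter fun a : IdxD d => (a:ℕ) ∈ T).card = (AsetD d ∩ T).card := by
    rw [huniv, Finset.filter_attach (fun n => n ∈ T) (AsetD d), Finset.card_map,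
      Finset.card_attach, Finset.filter_mem_eq_inter]
  have hc2 : (Finset.univ.filter fun a : IdxD d => ¬ (a:ℕ) ∈ T).card
      = d - (AsetD d ∩ T).card := by
    have := Finset.card_filter_add_card_filter_not
      (s := (Finset.univ : Finset (IdxD d))) (p := fun a : IdxD d => (a:ℕ) ∈ T)
    have hcard : (Finset.univ : Finset (IdxD d)).card = d := by
      rw [huniv, Finset.card_attach]
      simp [AsetD]
    omega
  rw [hc1, hc2]

lemma card_idx (d : ℕ) : Fintype.card (IdxD d) = d := by
  rw [Fintype.card_coe]; simp [AsetD]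

lemma count (d : ℕ) (Q : (IdxD d → ZMod 2) → ZMod 2) :
    ∑ u : IdxD d → ZMod 2, sgn2 (Q u)
      = 2^d - 2 * (Nat.card {u : IdxD d → ZMod 2 // Q u = 1} : ℤ) := by
  have h : ∀ x : ZMod 2, sgn2 x = 1 - 2 * (if x = 1 then (1:ℤ) else 0) := by decide
  have hcard : (Finset.univ : Finset (IdxD d → ZMod 2)).card = 2^d := by
    rw [Finset.card_univ, Fintype.card_fun, card_idx]
    rfl
  have hN : (Nat.card {u : IdxD d → ZMod 2 // Q u = 1})
      = (Finset.univ.filter fun u : IdxD d → ZMod 2 => Q u = 1).card := by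
    rw [Nat.card_eq_fintype_card, Fintype.card_subtype]
  calc ∑ u : IdxD d → ZMod 2, sgn2 (Q u)
      = ∑ u : IdxD d → ZMod 2, (1 - 2 * (if Q u = 1 then (1:ℤ) else 0)) :=
        Finset.sum_congr rfl fun u _ => h _
    _ = _ := by
        rw [Finset.sum_sub_distrib, Finset.sum_const, ← Finset.mul_sum, Finset.sum_boole]
        rw [hN, hcard]
        ring

lemma re_int_mul (k : ℤ) (z : GaussianInt) : (((k : ℤ) : GaussianInt) * z).re = k * z.re := by
  simp [Zsqrtd.re_mul]

end St19


open St19 in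
/-- From Lemma 2.1 (representatives) of the paper: the number of nonsingular vectors of the
quadratic form `Q` of `τ^{(d)}`, for even `d ≥ 6`, is `2^{d-1} + 2^{(d-2)/2}` when
`d mod 8 ∈ {0, 6}` and `2^{d-1} - 2^{(d-2)/2}` when `d mod 8 ∈ {2, 4}`. -/
theorem statement19 (d : ℕ) (hd : 6 ≤ d) (heven : d % 2 = 0) :
    ((d % 8 = 0 ∨ d % 8 = 6) →
      Nat.card {u : IdxD d → ZMod 2 // Qd d u = 1} = 2 ^ (d - 1) + 2 ^ ((d - 2) / 2)) ∧
    ((d % 8 = 2 ∨ d % 8 = 4) →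
      Nat.card {u : IdxD d → ZMod 2 // Qd d u = 1} = 2 ^ (d - 1) - 2 ^ ((d - 2) / 2)) := by
  obtain ⟨m, hm⟩ : ∃ m, d = 2 * m + 4 := ⟨(d - 4) / 2, by omega⟩
  subst hm
  obtain ⟨e2, he2⟩ : ∃ a : IdxD (2*m+4), (a:ℕ) = 2 :=
    ⟨⟨2, by simp only [AsetD, Finset.mem_Icc]; omega⟩, rfl⟩
  obtain ⟨e3, he3⟩ : ∃ a : IdxD (2*m+4), (a:ℕ) = 3 :=
    ⟨⟨3, by simp only [AsetD, Finset.mem_Icc]; omega⟩, rfl⟩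
  obtain ⟨e4, he4⟩ : ∃ a : IdxD (2*m+4), (a:ℕ) = 4 :=
    ⟨⟨4, by simp only [AsetD, Finset.mem_Icc]; omega⟩, rfl⟩
  obtain ⟨e5, he5⟩ : ∃ a : IdxD (2*m+4), (a:ℕ) = 5 :=
    ⟨⟨5, by simp only [AsetD, Finset.mem_Icc]; omega⟩, rfl⟩
  have hq2 : ∀ a : IdxD (2*m+4), (a = e2 ↔ (a:ℕ) = 2) :=
    fun a => ⟨fun h => by rw [h, he2], fun h => Subtype.ext (by rw [h, he2])⟩
  have hq3 : ∀ a : IdxD (2*m+4), (a = e3 ↔ (a:ℕ) = 3) :=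
    fun a => ⟨fun h => by rw [h, he3], fun h => Subtype.ext (by rw [h, he3])⟩
  have hq4 : ∀ a : IdxD (2*m+4), (a = e4 ↔ (a:ℕ) = 4) :=
    fun a => ⟨fun h => by rw [h, he4], fun h => Subtype.ext (by rw [h, he4])⟩
  have hq5 : ∀ a : IdxD (2*m+4), (a = e5 ↔ (a:ℕ) = 5) :=
    fun a => ⟨fun h => by rw [h, he5], fun h => Subtype.ext (by rw [h, he5])⟩
  -- the linear sums
  have hA : ∀ u : IdxD (2*m+4) → ZMod 2,
      (∑ a : IdxD (2*m+4), u a * (if (a:ℕ) = 2 ∨ (a:ℕ) = 3 then 1 else 0))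
        = u e2 + u e3 := by
    intro u
    have hterm : ∀ a : IdxD (2*m+4), u a * (if (a:ℕ) = 2 ∨ (a:ℕ) = 3 then 1 else 0)
        = (if a = e2 then u a else 0) + (if a = e3 then u a else 0) := by
      intro a
      by_cases h1 : (a:ℕ) = 2
      · rw [if_pos (Or.inl h1), if_pos ((hq2 a).mpr h1),
          if_neg (fun hh => by rw [(hq3 a).mp hh] at h1; omega), mul_one, add_zero]
      · by_cases h2 : (a:ℕ) = 3
        · rw [if_pos (Or.inr h2), if_neg (fun hh => by rw [(hq2 a).mp hh] at h2; omega),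
            if_pos ((hq3 a).mpr h2), mul_one, zero_add]
        · rw [if_neg (by tauto), if_neg (fun hh => h1 ((hq2 a).mp hh)),
            if_neg (fun hh => h2 ((hq3 a).mp hh)), mul_zero, add_zero]
    rw [Finset.sum_congr rfl fun a _ => hterm a, Finset.sum_add_distrib,
      Finset.sum_ite_eq' Finset.univ e2 u, Finset.sum_ite_eq' Finset.univ e3 u,
      if_pos (Finset.mem_univ _), if_pos (Finset.mem_univ _)]
  have hB : ∀ u : IdxD (2*m+4) → ZMod 2,
      (∑ a : IdxD (2*m+4), u a * (if (a:ℕ) = 4 ∨ (a:ℕ) = 5 then 1 else 0))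
        = u e4 + u e5 := by
    intro u
    have hterm : ∀ a : IdxD (2*m+4), u a * (if (a:ℕ) = 4 ∨ (a:ℕ) = 5 then 1 else 0)
        = (if a = e4 then u a else 0) + (if a = e5 then u a else 0) := by
      intro a
      by_cases h1 : (a:ℕ) = 4
      · rw [if_pos (Or.inl h1), if_pos ((hq4 a).mpr h1),
          if_neg (fun hh => by rw [(hq5 a).mp hh] at h1; omega), mul_one, add_zero]
      · by_cases h2 : (a:ℕ) = 5
        · rw [if_pos (Or.inr h2), if_neg (fun hh => by rw [(hq4 a).mp hh] at h2; omega),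
            if_pos ((hq5 a).mpr h2), mul_one, zero_add]
        · rw [if_neg (by tauto), if_neg (fun hh => h1 ((hq4 a).mp hh)),
            if_neg (fun hh => h2 ((hq5 a).mp hh)), mul_zero, add_zero]
    rw [Finset.sum_congr rfl fun a _ => hterm a, Finset.sum_add_distrib,
      Finset.sum_ite_eq' Finset.univ e4 u, Finset.sum_ite_eq' Finset.univ e5 u,
      if_pos (Finset.mem_univ _), if_pos (Finset.mem_univ _)]
  -- cast lemmas
  have hP : ∀ u : IdxD (2*m+4) → ZMod 2,
      (∑ a : IdxD (2*m+4), ∑ b : IdxD (2*m+4), if (a:ℕ) < (b:ℕ) then u a * u b else 0)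
        = (((∑ a : IdxD (2*m+4), ∑ b : IdxD (2*m+4),
            if (a:ℕ) < (b:ℕ) then (u a).val * (u b).val else 0 : ℕ)) : ZMod 2) := by
    intro u
    rw [Nat.cast_sum]
    refine Finset.sum_congr rfl fun a _ => ?_
    rw [Nat.cast_sum]
    refine Finset.sum_congr rfl fun b _ => ?_
    by_cases h : (a:ℕ) < (b:ℕ)
    · rw [if_pos h, if_pos h, Nat.cast_mul, val_cast, val_cast]
    · rw [if_neg h, if_neg h, Nat.cast_zero]
  have hW : ∀ u : IdxD (2*m+4) → ZMod 2,
      (∑ a : IdxD (2*m+4), u a) = (((∑ a : IdxD (2*m+4), (u a).val : ℕ)) : ZMod 2) := by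
    intro u
    rw [Nat.cast_sum]
    exact Finset.sum_congr rfl fun a _ => (val_cast _).symm
  have hkey : ∀ u : IdxD (2*m+4) → ZMod 2,
      2 * (∑ a : IdxD (2*m+4), ∑ b : IdxD (2*m+4),
          if (a:ℕ) < (b:ℕ) then (u a).val * (u b).val else 0)
        + (∑ a : IdxD (2*m+4), (u a).val)
      = (∑ a : IdxD (2*m+4), (u a).val) * (∑ a : IdxD (2*m+4), (u a).val) := by
    intro u
    exact (sq_sum (fun a => (u a).val)
      (fun a => by show (u a).val ≤ 1; have := ZMod.val_lt (u a); omega)).symm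
  -- product identities
  have hne23 : e2 ≠ e3 := fun h => by
    have h' := congrArg (fun a : IdxD (2*m+4) => (a:ℕ)) h
    simp only [he2, he3] at h'
    omega
  have hfil : ∀ (T : Finset ℕ) (E : Finset (IdxD (2*m+4))),
      (∀ x : IdxD (2*m+4), (x:ℕ) ∈ T ↔ x ∈ E) →
      ∀ f : IdxD (2*m+4) → GaussianInt,
      (∏ a : IdxD (2*m+4), if (a:ℕ) ∈ T then f a else 1) = ∏ a ∈ E, f a := by
    intro T E hTE f
    rw [← Finset.prod_filter]
    congr 1
    ext x
    simp only [Finset.mem_filter, Finset.mem_univ, true_and]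
    exact hTE x
  have hmem23 : ∀ x : IdxD (2*m+4),
      (x:ℕ) ∈ ({2,3} : Finset ℕ) ↔ x ∈ ({e2, e3} : Finset (IdxD (2*m+4))) := by
    intro x
    simp only [Finset.mem_insert, Finset.mem_singleton, hq2 x, hq3 x]
  have hmem45 : ∀ x : IdxD (2*m+4),
      (x:ℕ) ∈ ({4,5} : Finset ℕ) ↔ x ∈ ({e4, e5} : Finset (IdxD (2*m+4))) := by
    intro x
    simp only [Finset.mem_insert, Finset.mem_singleton, hq4 x, hq5 x]
  have hmem2345 : ∀ x : IdxD (2*m+4),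
      (x:ℕ) ∈ ({2,3,4,5} : Finset ℕ) ↔ x ∈ ({e2, e3, e4, e5} : Finset (IdxD (2*m+4))) := by
    intro x
    simp only [Finset.mem_insert, Finset.mem_singleton, hq2 x, hq3 x, hq4 x, hq5 x]
  have hne45 : e4 ≠ e5 := fun h => by
    have h' := congrArg (fun a : IdxD (2*m+4) => (a:ℕ)) h
    simp only [he4, he5] at h'
    omega
  have hPi0 : ∀ u : IdxD (2*m+4) → ZMod 2,
      (∏ a : IdxD (2*m+4), if (a:ℕ) ∈ (∅ : Finset ℕ)
          then ((sgn2 (u a) : ℤ) : GaussianInt) else 1) = 1 := by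
    intro u; simp
  have hPi23 : ∀ u : IdxD (2*m+4) → ZMod 2,
      (∏ a : IdxD (2*m+4), if (a:ℕ) ∈ ({2,3} : Finset ℕ)
          then ((sgn2 (u a) : ℤ) : GaussianInt) else 1)
      = ((sgn2 (u e2) : ℤ) : GaussianInt) * ((sgn2 (u e3) : ℤ) : GaussianInt) := by
    intro u
    rw [hfil _ _ hmem23, Finset.prod_pair hne23]
  have hPi45 : ∀ u : IdxD (2*m+4) → ZMod 2,
      (∏ a : IdxD (2*m+4), if (a:ℕ) ∈ ({4,5} : Finset ℕ)
          then ((sgn2 (u a) : ℤ) : GaussianInt) else 1)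
      = ((sgn2 (u e4) : ℤ) : GaussianInt) * ((sgn2 (u e5) : ℤ) : GaussianInt) := by
    intro u
    rw [hfil _ _ hmem45, Finset.prod_pair hne45]
  have hPi2345 : ∀ u : IdxD (2*m+4) → ZMod 2,
      (∏ a : IdxD (2*m+4), if (a:ℕ) ∈ ({2,3,4,5} : Finset ℕ)
          then ((sgn2 (u a) : ℤ) : GaussianInt) else 1)
      = ((sgn2 (u e2) : ℤ) : GaussianInt) * ((sgn2 (u e3) : ℤ) : GaussianInt)
        * (((sgn2 (u e4) : ℤ) : GaussianInt) * ((sgn2 (u e5) : ℤ) : GaussianInt)) := by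
    intro u
    rw [hfil _ _ hmem2345]
    have h1 : e2 ∉ ({e3, e4, e5} : Finset (IdxD (2*m+4))) := by
      simp only [Finset.mem_insert, Finset.mem_singleton, Subtype.ext_iff, he2, he3, he4, he5]
      omega
    have h2 : e3 ∉ ({e4, e5} : Finset (IdxD (2*m+4))) := by
      simp only [Finset.mem_insert, Finset.mem_singleton, Subtype.ext_iff, he3, he4, he5]
      omega
    rw [Finset.prod_insert h1, Finset.prod_insert h2, Finset.prod_pair hne45]
    ring
  -- the pointwise identity
  have point : ∀ u : IdxD (2*m+4) → ZMod 2,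
      2 * sgn2 (Qd (2*m+4) u)
        = reHom ((1 + gi) *
            ((gi ^ (∑ a : IdxD (2*m+4), (u a).val)
                * ∏ a : IdxD (2*m+4), (if (a:ℕ) ∈ (∅ : Finset ℕ)
                    then ((sgn2 (u a) : ℤ) : GaussianInt) else 1))
              + ((gi ^ (∑ a : IdxD (2*m+4), (u a).val)
                * ∏ a : IdxD (2*m+4), (if (a:ℕ) ∈ ({2,3} : Finset ℕ)
                    then ((sgn2 (u a) : ℤ) : GaussianInt) else 1))
              + ((gi ^ (∑ a : IdxD (2*m+4), (u a).val)
                * ∏ a : IdxD (2*m+4), (if (a:ℕ) ∈ ({4,5} : Finset ℕ)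
                    then ((sgn2 (u a) : ℤ) : GaussianInt) else 1))
              - (gi ^ (∑ a : IdxD (2*m+4), (u a).val)
                * ∏ a : IdxD (2*m+4), (if (a:ℕ) ∈ ({2,3,4,5} : Finset ℕ)
                    then ((sgn2 (u a) : ℤ) : GaussianInt) else 1)))))) := by
    intro u
    have hQ : Qd (2*m+4) u
        = (((∑ a : IdxD (2*m+4), ∑ b : IdxD (2*m+4),
            if (a:ℕ) < (b:ℕ) then (u a).val * (u b).val else 0 : ℕ)) : ZMod 2)
          + (((∑ a : IdxD (2*m+4), (u a).val : ℕ)) : ZMod 2)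
          + (u e2 + u e3) * (u e4 + u e5) := by
      rw [Qd_eq (by omega) u, hA u, hB u, hP u, hW u]
    rw [hQ, key _ _ (hkey u) (u e2 + u e3) (u e4 + u e5), reHom_apply]
    congr 1
    rw [hPi0 u, hPi23 u, hPi45 u, hPi2345 u, sgn2_add, sgn2_add]
    push_cast
    ring
  -- summing up
  set N : ℕ := Nat.card {u : IdxD (2*m+4) → ZMod 2 // Qd (2*m+4) u = 1} with hNdef
  have hc0 : ((AsetD (2*m+4)) ∩ (∅ : Finset ℕ)).card = 0 := by simp
  have hi23 : (AsetD (2*m+4)) ∩ ({2,3} : Finset ℕ) = {2,3} := by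
    ext n
    simp only [Finset.mem_inter, AsetD, Finset.mem_Icc, Finset.mem_insert, Finset.mem_singleton]
    omega
  have hi45 : (AsetD (2*m+4)) ∩ ({4,5} : Finset ℕ) = {4,5} := by
    ext n
    simp only [Finset.mem_inter, AsetD, Finset.mem_Icc, Finset.mem_insert, Finset.mem_singleton]
    omega
  have hi2345 : (AsetD (2*m+4)) ∩ ({2,3,4,5} : Finset ℕ) = {2,3,4,5} := by
    ext n
    simp only [Finset.mem_inter, AsetD, Finset.mem_Icc, Finset.mem_insert, Finset.mem_singleton]
    omega
  have hc23 : ((AsetD (2*m+4)) ∩ ({2,3} : Finset ℕ)).card = 2 := by rw [hi23]; rfl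
  have hc45 : ((AsetD (2*m+4)) ∩ ({4,5} : Finset ℕ)).card = 2 := by rw [hi45]; rfl
  have hc2345 : ((AsetD (2*m+4)) ∩ ({2,3,4,5} : Finset ℕ)).card = 4 := by rw [hi2345]; rfl
  have hsum : 2 * ((2:ℤ)^(2*m+4) - 2 * (N : ℤ))
      = ((1 + gi) *
          ((1 - gi) ^ 0 * (1 + gi) ^ (2*m+4 - 0)
            + ((1 - gi) ^ 2 * (1 + gi) ^ (2*m+4 - 2)
            + ((1 - gi) ^ 2 * (1 + gi) ^ (2*m+4 - 2)
            - (1 - gi) ^ 4 * (1 + gi) ^ (2*m+4 - 4))))).re := by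
    rw [← count (2*m+4) (Qd (2*m+4)), Finset.mul_sum]
    rw [Finset.sum_congr rfl fun u _ => point u]
    rw [← map_sum reHom, reHom_apply]
    congr 1
    rw [← Finset.mul_sum]
    congr 1
    rw [Finset.sum_add_distrib, Finset.sum_add_distrib, Finset.sum_sub_distrib]
    rw [bigsum (∅ : Finset ℕ), bigsum ({2,3} : Finset ℕ), bigsum ({4,5} : Finset ℕ),
      bigsum ({2,3,4,5} : Finset ℕ), hc0, hc23, hc45, hc2345]
  -- algebraic evaluation
  have p1 : ((1 + gi : GaussianInt)) ^ 2 = 2 * gi := by decide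
  have e0 : ((1 + gi : GaussianInt)) ^ (2*m) = (2*gi) ^ m := by rw [pow_mul, p1]
  have e2' : ((1 + gi : GaussianInt)) ^ (2*m+2) = (2*gi) ^ m * (2*gi) := by
    rw [pow_add, pow_mul, p1]
  have e4' : ((1 + gi : GaussianInt)) ^ (2*m+4) = (2*gi) ^ m * ((2*gi) * (2*gi)) := by
    rw [pow_add, pow_mul, p1, show ((1 + gi : GaussianInt)) ^ 4 = (2*gi) * (2*gi) from by decide]
  have hgm : ((2 : GaussianInt) * gi) ^ m = ((2 ^ m : ℤ) : GaussianInt) * gi ^ m := by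
    rw [mul_pow]
    push_cast
    ring
  have halg : (1 + gi) *
          ((1 - gi) ^ 0 * (1 + gi) ^ (2*m+4 - 0)
            + ((1 - gi) ^ 2 * (1 + gi) ^ (2*m+4 - 2)
            + ((1 - gi) ^ 2 * (1 + gi) ^ (2*m+4 - 2)
            - (1 - gi) ^ 4 * (1 + gi) ^ (2*m+4 - 4))))
        = ((8 * 2 ^ m : ℤ) : GaussianInt) * ((1 + gi) * gi ^ m) := by
    rw [show 2*m+4 - 0 = 2*m+4 from rfl, show 2*m+4 - 2 = 2*m+2 by omega,
      show 2*m+4 - 4 = 2*m by omega, e0, e2', e4', hgm]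
    have hbr : (1 + gi) * ((1 - gi) ^ 0 * ((2*gi) * (2*gi))
        + ((1 - gi) ^ 2 * (2*gi) + ((1 - gi) ^ 2 * (2*gi) - (1 - gi) ^ 4)))
        = 8 * (1 + gi) := by decide
    calc (1 + gi) * ((1 - gi) ^ 0 * (((2^m:ℤ):GaussianInt) * gi ^ m * ((2*gi) * (2*gi)))
            + ((1 - gi) ^ 2 * (((2^m:ℤ):GaussianInt) * gi ^ m * (2*gi))
            + ((1 - gi) ^ 2 * (((2^m:ℤ):GaussianInt) * gi ^ m * (2*gi))
            - (1 - gi) ^ 4 * (((2^m:ℤ):GaussianInt) * gi ^ m))))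
        = (((2^m:ℤ):GaussianInt) * gi ^ m) * ((1 + gi) * ((1 - gi) ^ 0 * ((2*gi) * (2*gi))
            + ((1 - gi) ^ 2 * (2*gi) + ((1 - gi) ^ 2 * (2*gi) - (1 - gi) ^ 4)))) := by ring
      _ = (((2^m:ℤ):GaussianInt) * gi ^ m) * (8 * (1 + gi)) := by rw [hbr]
      _ = ((8 * 2 ^ m : ℤ) : GaussianInt) * ((1 + gi) * gi ^ m) := by push_cast; ring
  have htot : 2 * ((2:ℤ)^(2*m+4) - 2 * (N : ℤ)) = (8 * 2 ^ m) * ((1 + gi) * gi ^ m).re := by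
    rw [hsum, halg, re_int_mul]
  have hmlt : m % 4 < 4 := Nat.mod_lt _ (by norm_num)
  constructor
  · intro H
    have hm4 : m % 4 = 1 ∨ m % 4 = 2 := by omega
    have hρ : ((1 + gi) * gi ^ m).re = -1 := by
      rw [gi_pow_mod]
      rcases hm4 with h | h <;> rw [h] <;> decide
    rw [hρ] at htot
    rw [show 2*m+4 - 1 = 2*m+3 by omega, show (2*m+4 - 2)/2 = m+1 by omega]
    have hZ : (N : ℤ) = 2^(2*m+3) + 2^(m+1) := by
      have pe1 : (2:ℤ)^(2*m+4) = 2 * 2^(2*m+3) := by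
        rw [show 2*m+4 = (2*m+3)+1 by ring, pow_succ]; ring
      have pe2 : (2:ℤ)^(m+1) = 2 * 2^m := by rw [pow_succ]; ring
      rw [pe1] at htot
      rw [pe2]
      linarith
    exact_mod_cast hZ
  · intro H
    have hm4 : m % 4 = 0 ∨ m % 4 = 3 := by omega
    have hρ : ((1 + gi) * gi ^ m).re = 1 := by
      rw [gi_pow_mod]
      rcases hm4 with h | h <;> rw [h] <;> decide
    rw [hρ] at htot
    rw [show 2*m+4 - 1 = 2*m+3 by omega, show (2*m+4 - 2)/2 = m+1 by omega]
    have hZ : (N : ℤ) = 2^(2*m+3) - 2^(m+1) := by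
      have pe1 : (2:ℤ)^(2*m+4) = 2 * 2^(2*m+3) := by
        rw [show 2*m+4 = (2*m+3)+1 by ring, pow_succ]; ring
      have pe2 : (2:ℤ)^(m+1) = 2 * 2^m := by rw [pow_succ]; ring
      rw [pe1] at htot
      rw [pe2]
      linarith
    have hle : (2:ℕ)^(m+1) ≤ 2^(2*m+3) := Nat.pow_le_pow_right (by norm_num) (by omega)
    have : (N : ℤ) = ((2^(2*m+3) - 2^(m+1) : ℕ) : ℤ) := by
      rw [Nat.cast_sub hle, hZ]
      push_cast
      ring
    exact_mod_cast this
end
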